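/- arXiv:2410.13470 — 9 statements merged into one kernel-verified Lean document; each statement's English description precedes it below -/
import Mathlib

section
/- Let m, d, t be natural numbers with t > m + d, F a field, and H₁,…,H_t affine hyperplanes in F^m in general position. Let T ⊆ F^m be the set of all points lying in the intersection of some m of these hyperplanes. Then every nonzero polynomial f ∈ F[X₁,…,X_m] of total degree at most d is nonzero at at least binom(t−d, m) points of T. Consequently, the linear code obtained by evaluating all m-variate polynomials of degree at most d on T (a code of block length binom(t,m) and dimension binom(d+m,m)) has minimum Hamming distance at least binom(t−d, m). -/
/-
Induction on the number `t` of hyperplanes; let `ℓᵢ` be the affine form defining `Hᵢ`. A nonzero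
constant is nonzero on all `binom(t, m)` points of `T`. If some `ℓᵢ` divides `f = ℓᵢ g`, then
`deg g < d` and by induction `g` is nonzero at `binom(t - d, m)` points of the intersection set of
the other `t - 1` hyperplanes; none of these lies on `Hᵢ`, so `f` is nonzero there as well.
Otherwise, parametrizing `Hᵢ` by `F^(m-1)`, the other hyperplanes become `t - 1` hyperplanes in
general position whose intersection points lie in `T ∩ Hᵢ`, and `f` restricts to a nonzero
polynomial of degree `≤ d`; by induction `f` is nonzero at `binom(t-1-d, m-1)` points of each
`T ∩ Hᵢ`. Since a point lies on at most `m` hyperplanes, the number `N` of points of `T` where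
`f ≠ 0` satisfies `m N ≥ t binom(t-1-d, m-1) ≥ (t-d) binom(t-1-d, m-1) = m binom(t-d, m)`.
For the code, apply this to `f - g`.
-/

open MvPolynomial Finset

namespace MvPolynomial

section CommSemiring

variable {R : Type*} [CommSemiring R]

theorem totalDegree_aeval_le {σ τ : Type*} {g : σ → MvPolynomial τ R}
    (hg : ∀ i, (g i).totalDegree ≤ 1) (p : MvPolynomial σ R) :
    (aeval g p).totalDegree ≤ p.totalDegree := by
  conv_lhs => rw [p.as_sum, map_sum]
  refine totalDegree_finsetSum_le fun u hu => ?_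
  rw [aeval_monomial, ← C_eq_algebraMap]
  calc (C (coeff u p) * u.prod fun i k => g i ^ k).totalDegree
      ≤ ∑ i ∈ u.support, (g i ^ u i).totalDegree := by
        refine (totalDegree_mul _ _).trans ?_
        rw [totalDegree_C, zero_add]
        exact totalDegree_finsetProd _ _
    _ ≤ ∑ i ∈ u.support, u i := by
        refine Finset.sum_le_sum fun i _ => (totalDegree_pow _ _).trans ?_
        simpa using Nat.mul_le_mul_left (u i) (hg i)
    _ ≤ p.totalDegree := le_totalDegree hu

theorem eval_aeval_insertNth {m : ℕ} (j : Fin (m + 1)) (E : MvPolynomial (Fin m) R)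
    (y : Fin m → R) (p : MvPolynomial (Fin (m + 1)) R) :
    eval y (aeval (j.insertNth E X) p) = eval (j.insertNth (eval y E) y) p := by
  change aeval y (aeval _ p) = aeval _ p
  rw [comp_aeval_apply]
  congr 2
  funext i
  induction i using Fin.succAboveCases j <;> simp

end CommSemiring

theorem X_sub_rename_dvd_of_aeval_insertNth_eq_zero {R : Type*} [CommRing R] {m : ℕ}
    (j : Fin (m + 1)) (E : MvPolynomial (Fin m) R) {p : MvPolynomial (Fin (m + 1)) R}
    (hp : aeval (j.insertNth E X) p = 0) : X j - rename j.succAbove E ∣ p := by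
  set I := Ideal.span {X j - rename j.succAbove E}
  have hmod : (Ideal.Quotient.mkₐ R I).comp ((rename j.succAbove).comp (aeval (j.insertNth E X)))
      = Ideal.Quotient.mkₐ R I := by
    refine algHom_ext (Fin.succAboveCases j ?_ fun k => ?_)
    · simp only [AlgHom.comp_apply, Fin.insertNth_apply_same, Ideal.Quotient.mkₐ_eq_mk, aeval_X,
        Ideal.Quotient.eq, I, Ideal.mem_span_singleton]
      exact dvd_sub_comm.1 dvd_rfl
    · simp
  have := AlgHom.congr_fun hmod p
  simp only [AlgHom.comp_apply, hp, map_zero] at this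
  simpa [I, Ideal.mem_span_singleton] using (Ideal.Quotient.eq_zero_iff_mem.1 this.symm)

end MvPolynomial

structure IsGeneralPosition {ι V : Type*} (H : ι → Set V) (m : ℕ) : Prop where
  existsUnique : ∀ s : Finset ι, #s = m → ∃! x, ∀ i ∈ s, x ∈ H i
  not_exists : ∀ s : Finset ι, #s = m + 1 → ¬∃ x, ∀ i ∈ s, x ∈ H i

def intersectionSet {ι V : Type*} (H : ι → Set V) (m : ℕ) : Set V :=
  {x | ∃ s : Finset ι, #s = m ∧ ∀ i ∈ s, x ∈ H i}

theorem intersectionSet_comp_subset {ι ι' V : Type*} (H : ι → Set V) (e : ι' ↪ ι) (m : ℕ) :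
    intersectionSet (H ∘ e) m ⊆ intersectionSet H m := by
  rintro x ⟨s, hs, hx⟩
  exact ⟨s.map e, by simpa using hs, by simpa [forall_mem_map] using hx⟩

theorem Finset.card_insert_map_of_forall_ne {ι ι' : Type*} [DecidableEq ι] (e : ι' ↪ ι) {i₀ : ι}
    (he : ∀ r, e r ≠ i₀) (s : Finset ι') : #(insert i₀ (s.map e)) = #s + 1 := by
  rw [card_insert_of_notMem (by simpa using fun r _ => he r), card_map]

theorem image_intersectionSet_preimage_subset {ι ι' V V' : Type*} {H : ι → Set V} (e : ι' ↪ ι)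
    {i₀ : ι} (he : ∀ r, e r ≠ i₀) {φ : V' → V} (hφ : Set.range φ ⊆ H i₀) (m : ℕ) :
    φ '' intersectionSet (fun r => φ ⁻¹' H (e r)) m ⊆ intersectionSet H (m + 1) ∩ H i₀ := by
  classical
  rintro _ ⟨y, ⟨s, hs, hy⟩, rfl⟩
  refine ⟨⟨insert i₀ (s.map e), by rw [Finset.card_insert_map_of_forall_ne e he, hs], ?_⟩,
    hφ ⟨y, rfl⟩⟩
  simpa [forall_mem_map] using ⟨hφ ⟨y, rfl⟩, hy⟩

namespace IsGeneralPosition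

variable {ι V : Type*} {H : ι → Set V} {m : ℕ}

theorem card_filter_mem_le [Fintype ι] (hH : IsGeneralPosition H m) (x : V)
    [DecidablePred (x ∈ H ·)] : #{i | x ∈ H i} ≤ m := by
  by_contra! h
  obtain ⟨s, hs, hcard⟩ := exists_subset_card_eq (Nat.succ_le_of_lt h)
  exact hH.not_exists s hcard ⟨x, fun i hi => (mem_filter.1 (hs hi)).2⟩

theorem filter_mem_eq [Fintype ι] (hH : IsGeneralPosition H m) {x : V}
    [DecidablePred (x ∈ H ·)] {s : Finset ι} (hs : #s = m) (hx : ∀ i ∈ s, x ∈ H i) :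
    ({i | x ∈ H i} : Finset ι) = s :=
  (eq_of_subset_of_card_le (fun i hi => by simpa using hx i hi)
    (hs ▸ hH.card_filter_mem_le x)).symm

theorem intersectionSet_finite [Finite ι] (hH : IsGeneralPosition H m) :
    (intersectionSet H m).Finite := by
  have : intersectionSet H m ⊆ ⋃ s : {s : Finset ι // #s = m}, {x | ∀ i ∈ s.1, x ∈ H i} := by
    rintro x ⟨s, hs, hx⟩
    exact Set.mem_iUnion.2 ⟨⟨s, hs⟩, hx⟩
  refine Set.Finite.subset (Set.finite_iUnion fun s => ?_) this
  obtain ⟨x, -, hunique⟩ := hH.existsUnique s.1 s.2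
  exact (Set.finite_singleton x).subset hunique

theorem choose_le_ncard_intersectionSet [Fintype ι] (hH : IsGeneralPosition H m) :
    (Fintype.card ι).choose m ≤ (intersectionSet H m).ncard := by
  classical
  have hcover : ↑(powersetCard m (univ : Finset ι)) ⊆
      (fun x => ({i | x ∈ H i} : Finset ι)) '' intersectionSet H m := by
    intro s hs
    rw [mem_coe, mem_powersetCard_univ] at hs
    obtain ⟨x, hx, -⟩ := hH.existsUnique s hs
    exact ⟨x, ⟨s, hs, hx⟩, hH.filter_mem_eq hs hx⟩
  calc (Fintype.card ι).choose m
      = (↑(powersetCard m (univ : Finset ι)) : Set (Finset ι)).ncard := by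
        rw [Set.ncard_coe_finset, card_powersetCard, card_univ]
    _ ≤ _ := Set.ncard_le_ncard hcover (hH.intersectionSet_finite.image _)
    _ ≤ _ := Set.ncard_image_le hH.intersectionSet_finite

theorem card_mul_le_mul_ncard [Fintype ι] (hH : IsGeneralPosition H m) {Z : Set V}
    (hZ : Z.Finite) {k : ℕ} (hk : ∀ i, k ≤ (Z ∩ H i).ncard) :
    Fintype.card ι * k ≤ m * Z.ncard := by
  classical
  have hcount := card_mul_le_card_mul (fun i x => x ∈ H i) (s := univ) (t := hZ.toFinset)
    (m := k) (n := m) (fun i _ => by simpa [bipartiteAbove, ← Set.ncard_coe_finset] using hk i)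
    (fun x _ => by simpa [bipartiteBelow] using hH.card_filter_mem_le x)
  rwa [card_univ, ← Set.ncard_eq_toFinset_card Z hZ, mul_comm _ m] at hcount

theorem comp_embedding {ι' : Type*} (hH : IsGeneralPosition H m) (e : ι' ↪ ι) :
    IsGeneralPosition (H ∘ e) m where
  existsUnique s hs := by
    simpa [forall_mem_map] using hH.existsUnique (s.map e) (by simpa using hs)
  not_exists s hs := by
    simpa [forall_mem_map] using hH.not_exists (s.map e) (by simpa using hs)

theorem notMem_of_mem_intersectionSet_comp {ι' : Type*} (hH : IsGeneralPosition H m)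
    (e : ι' ↪ ι) {i₀ : ι} (he : ∀ r, e r ≠ i₀) {x : V} (hx : x ∈ intersectionSet (H ∘ e) m) :
    x ∉ H i₀ := by
  classical
  obtain ⟨s, hs, hxs⟩ := hx
  refine fun hx₀ => hH.not_exists (insert i₀ (s.map e))
    (by rw [Finset.card_insert_map_of_forall_ne e he, hs]) ⟨x, ?_⟩
  simpa [forall_mem_map] using ⟨hx₀, hxs⟩

theorem preimage_comp {ι' V' : Type*} (hH : IsGeneralPosition H (m + 1)) (e : ι' ↪ ι)
    {i₀ : ι} (he : ∀ r, e r ≠ i₀) {φ : V' → V} (hφ : Function.Injective φ)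
    (hrange : Set.range φ = H i₀) :
    IsGeneralPosition (fun r => φ ⁻¹' H (e r)) m := by
  classical
  have hmem (s : Finset ι') (x : V) :
      (∀ i ∈ insert i₀ (s.map e), x ∈ H i) ↔ x ∈ H i₀ ∧ ∀ r ∈ s, x ∈ H (e r) := by
    simp
  refine ⟨fun s hs => ?_, fun s hs => ?_⟩
  · obtain ⟨x, hx, hunique⟩ := hH.existsUnique _
      (by rw [Finset.card_insert_map_of_forall_ne e he, hs])
    obtain ⟨hx₀, hxs⟩ := (hmem s x).1 hx
    obtain ⟨y, rfl⟩ := hrange.symm ▸ hx₀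
    exact ⟨y, hxs, fun y' hy' => hφ (hunique _ ((hmem s _).2 ⟨hrange ▸ ⟨y', rfl⟩, hy'⟩))⟩
  · rintro ⟨y, hy⟩
    exact hH.not_exists _ (by rw [Finset.card_insert_map_of_forall_ne e he, hs])
      ⟨φ y, (hmem s _).2 ⟨hrange ▸ ⟨y, rfl⟩, hy⟩⟩

theorem nonempty [Fintype ι] (hH : IsGeneralPosition H m) (hm : 0 < m)
    (ht : m ≤ Fintype.card ι) (i : ι) : (H i).Nonempty := by
  obtain ⟨s, hi, -, hs⟩ := exists_subsuperset_card_eq (singleton_subset_iff.2 (mem_univ i))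
    (by simpa [Nat.one_le_iff_ne_zero] using hm.ne') (by simpa using ht)
  obtain ⟨x, hx, -⟩ := hH.existsUnique s hs
  exact ⟨x, hx i (singleton_subset_iff.1 hi)⟩

theorem ne_univ [Fintype ι] (hH : IsGeneralPosition H m) (ht : m < Fintype.card ι) (i : ι) :
    H i ≠ Set.univ := by
  classical
  intro hi
  obtain ⟨s, hs, hcard⟩ := exists_subset_card_eq (s := univ.erase i) (n := m)
    (by rw [card_erase_of_mem (mem_univ i), card_univ]; omega)
  obtain ⟨x, hx, -⟩ := hH.existsUnique s hcard
  refine hH.not_exists (insert i s) ?_ ⟨x, ?_⟩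
  · rw [card_insert_of_notMem fun h => (mem_erase.1 (hs h)).1 rfl, hcard]
  · simpa [hi] using hx

end IsGeneralPosition

section Hyperplane

variable {F : Type*} [Field F] {m : ℕ}

def hyperplane (a : Fin m → F) (c : F) : Set (Fin m → F) :=
  {x | ∑ j, a j * x j = c}

noncomputable def affineForm (a : Fin m → F) (c : F) : MvPolynomial (Fin m) F :=
  ∑ j, C (a j) * X j - C c

theorem eval_affineForm (a : Fin m → F) (c : F) (x : Fin m → F) :
    eval x (affineForm a c) = ∑ j, a j * x j - c := by
  simp [affineForm]

theorem eval_affineForm_ne_zero_iff {a : Fin m → F} {c : F} {x : Fin m → F} :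
    eval x (affineForm a c) ≠ 0 ↔ x ∉ hyperplane a c := by
  simp [eval_affineForm, hyperplane, sub_eq_zero]

theorem totalDegree_affineForm_le (a : Fin m → F) (c : F) : (affineForm a c).totalDegree ≤ 1 := by
  refine (totalDegree_sub _ _).trans (max_le (totalDegree_finsetSum_le fun j _ => ?_) (by simp))
  exact (totalDegree_mul _ _).trans (by simp)

theorem one_le_totalDegree_affineForm {a : Fin m → F} (ha : a ≠ 0) (c : F) :
    1 ≤ (affineForm a c).totalDegree := by
  obtain ⟨j, hj⟩ := Function.ne_iff.1 ha
  have hcoeff : coeff (Finsupp.single j 1) (affineForm a c) = a j := by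
    simp [affineForm, coeff_sum, coeff_X, coeff_C, Finsupp.single_eq_single_iff,
      Ne.symm (Finsupp.single_ne_zero.2 one_ne_zero)]
  simpa using le_totalDegree (s := Finsupp.single j 1) (by simpa [hcoeff] using hj)

theorem ne_zero_of_hyperplane_nonempty_of_ne_univ {a : Fin m → F} {c : F}
    (hne : (hyperplane a c).Nonempty) (huniv : hyperplane a c ≠ Set.univ) : a ≠ 0 := by
  rintro rfl
  obtain ⟨x, hx⟩ := hne
  exact huniv (Set.eq_univ_of_forall fun y => by simpa [hyperplane] using hx)

section Parametrization

variable (a : Fin (m + 1) → F) (c : F) (j : Fin (m + 1))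

/-- The solution `x j` of the equation of `hyperplane a c` in terms of the other coordinates. -/
noncomputable def solveCoord : MvPolynomial (Fin m) F :=
  -(C (a j)⁻¹ * affineForm (fun k => a (j.succAbove k)) c)

noncomputable def hyperplaneParam (y : Fin m → F) : Fin (m + 1) → F :=
  j.insertNth (eval y (solveCoord a c j)) y

noncomputable def restrictHyperplane : MvPolynomial (Fin (m + 1)) F →ₐ[F] MvPolynomial (Fin m) F :=
  aeval (j.insertNth (solveCoord a c j) X)

theorem totalDegree_solveCoord_le : (solveCoord a c j).totalDegree ≤ 1 := by
  rw [solveCoord, totalDegree_neg]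
  exact (totalDegree_mul _ _).trans (by simpa using totalDegree_affineForm_le _ _)

theorem affineForm_eq_C_mul {a : Fin (m + 1) → F} {j : Fin (m + 1)} (ha : a j ≠ 0) (c : F) :
    affineForm a c = C (a j) * (X j - rename j.succAbove (solveCoord a c j)) := by
  have hinv : C (a j) * C (a j)⁻¹ = (1 : MvPolynomial (Fin (m + 1)) F) := by
    rw [← C_mul, mul_inv_cancel₀ ha, C_1]
  simp only [affineForm, solveCoord, map_neg, map_mul, map_sub, map_sum, rename_C, rename_X,
    Fin.sum_univ_succAbove _ j]
  linear_combination (C c - ∑ k, C (a (j.succAbove k)) * X (j.succAbove k)) * hinv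

theorem mem_hyperplane_iff {a : Fin (m + 1) → F} {j : Fin (m + 1)} (ha : a j ≠ 0) {c : F}
    {x : Fin (m + 1) → F} :
    x ∈ hyperplane a c ↔ x j = eval (x ∘ j.succAbove) (solveCoord a c j) := by
  rw [hyperplane, Set.mem_ofPred_eq, ← sub_eq_zero, ← eval_affineForm, affineForm_eq_C_mul ha]
  simp [eval_rename, ha, sub_eq_zero]

theorem hyperplaneParam_injective : Function.Injective (hyperplaneParam a c j) := fun y y' h => by
  simpa [hyperplaneParam] using congr_arg (· ∘ j.succAbove) h

theorem range_hyperplaneParam {a : Fin (m + 1) → F} {j : Fin (m + 1)} (ha : a j ≠ 0) (c : F) :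
    Set.range (hyperplaneParam a c j) = hyperplane a c := by
  ext x
  rw [mem_hyperplane_iff ha]
  constructor
  · rintro ⟨y, rfl⟩
    simp [hyperplaneParam, Function.comp_def]
  · intro hx
    refine ⟨x ∘ j.succAbove, funext fun i => ?_⟩
    induction i using Fin.succAboveCases j <;> simp [hyperplaneParam, hx]

theorem preimage_hyperplaneParam_hyperplane (a₁ : Fin (m + 1) → F) (c₁ : F) :
    hyperplaneParam a c j ⁻¹' hyperplane a₁ c₁ =
      hyperplane (fun k => a₁ (j.succAbove k) - a₁ j / a j * a (j.succAbove k))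
        (c₁ - a₁ j / a j * c) := by
  ext y
  simp only [Set.mem_preimage, hyperplane, Set.mem_ofPred_eq, hyperplaneParam,
    Fin.sum_univ_succAbove _ j, Fin.insertNth_apply_same, Fin.insertNth_apply_succAbove,
    solveCoord, eval_neg, eval_mul, eval_C, eval_affineForm, sub_mul, sum_sub_distrib, mul_assoc,
    ← mul_sum]
  constructor <;> intro h <;> linear_combination h

theorem eval_hyperplaneParam (p : MvPolynomial (Fin (m + 1)) F) (y : Fin m → F) :
    eval (hyperplaneParam a c j y) p = eval y (restrictHyperplane a c j p) :=
  (eval_aeval_insertNth _ _ _ _).symm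

theorem totalDegree_restrictHyperplane_le (p : MvPolynomial (Fin (m + 1)) F) :
    (restrictHyperplane a c j p).totalDegree ≤ p.totalDegree :=
  totalDegree_aeval_le (fun i => by
    induction i using Fin.succAboveCases j <;> simp [totalDegree_solveCoord_le]) p

theorem restrictHyperplane_ne_zero {a : Fin (m + 1) → F} {j : Fin (m + 1)} (ha : a j ≠ 0)
    {c : F} {p : MvPolynomial (Fin (m + 1)) F} (hp : ¬affineForm a c ∣ p) :
    restrictHyperplane a c j p ≠ 0 := fun h => hp <| by
  rw [affineForm_eq_C_mul ha]
  exact (ha.isUnit.map C).mul_left_dvd.2 (X_sub_rename_dvd_of_aeval_insertNth_eq_zero j _ h)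

end Parametrization

variable (F) in
def HasNonvanishingBound (m d t : ℕ) : Prop :=
  ∀ (a : Fin t → Fin m → F) (b : Fin t → F),
    IsGeneralPosition (fun i => hyperplane (a i) (b i)) m →
    ∀ f : MvPolynomial (Fin m) F, f ≠ 0 → f.totalDegree ≤ d →
      (t - d).choose m ≤
        {x ∈ intersectionSet (fun i => hyperplane (a i) (b i)) m | eval x f ≠ 0}.ncard

theorem IsGeneralPosition.normal_ne_zero {t : ℕ} {a : Fin t → Fin m → F} {b : Fin t → F}
    (hH : IsGeneralPosition (fun i => hyperplane (a i) (b i)) m) (hm : 0 < m) (ht : m < t)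
    (i : Fin t) : a i ≠ 0 :=
  ne_zero_of_hyperplane_nonempty_of_ne_univ (hH.nonempty hm (by simpa using ht.le) i)
    (hH.ne_univ (by simpa using ht) i)

theorem choose_le_ncard_of_totalDegree_eq_zero {ι σ : Type*} [Fintype ι] {H : ι → Set (σ → F)}
    (hH : IsGeneralPosition H m) {f : MvPolynomial σ F} (hf : f ≠ 0) (h0 : f.totalDegree = 0)
    (d : ℕ) : (Fintype.card ι - d).choose m ≤ {x ∈ intersectionSet H m | eval x f ≠ 0}.ncard := by
  obtain ⟨c, rfl⟩ : ∃ c, f = C c := ⟨_, totalDegree_eq_zero_iff_eq_C.1 h0⟩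
  have hc : c ≠ 0 := by rintro rfl; simp at hf
  simp only [eval_C, ne_eq, hc, not_false_eq_true, Set.sep_true]
  exact (Nat.choose_le_choose m (Nat.sub_le _ _)).trans hH.choose_le_ncard_intersectionSet

theorem choose_le_ncard_of_dvd {d t : ℕ} (IH : HasNonvanishingBound F m d t)
    {a : Fin (t + 1) → Fin m → F} {b : Fin (t + 1) → F}
    (hH : IsGeneralPosition (fun i => hyperplane (a i) (b i)) m) {i₀ : Fin (t + 1)}
    (ha : a i₀ ≠ 0) {f : MvPolynomial (Fin m) F} (hf : f ≠ 0)
    (hdvd : affineForm (a i₀) (b i₀) ∣ f) (hd : f.totalDegree ≤ d + 1) :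
    (t + 1 - (d + 1)).choose m ≤
      {x ∈ intersectionSet (fun i => hyperplane (a i) (b i)) m | eval x f ≠ 0}.ncard := by
  obtain ⟨g, rfl⟩ := hdvd
  have hg : g ≠ 0 := right_ne_zero_of_mul hf
  have hdg : g.totalDegree ≤ d := by
    have := one_le_totalDegree_affineForm ha (b i₀)
    rw [totalDegree_mul_of_isDomain (left_ne_zero_of_mul hf) hg] at hd
    omega
  set e := Fin.succAboveEmb i₀
  have he : ∀ r, e r ≠ i₀ := Fin.succAbove_ne i₀
  have hsub : {x ∈ intersectionSet (fun r => hyperplane (a (e r)) (b (e r))) m | eval x g ≠ 0} ⊆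
      {x ∈ intersectionSet (fun i => hyperplane (a i) (b i)) m |
        eval x (affineForm (a i₀) (b i₀) * g) ≠ 0} := by
    rintro x ⟨hxT, hgx⟩
    refine ⟨intersectionSet_comp_subset _ e m hxT, ?_⟩
    rw [eval_mul]
    exact mul_ne_zero
      (eval_affineForm_ne_zero_iff.2 (hH.notMem_of_mem_intersectionSet_comp e he hxT)) hgx
  rw [Nat.add_sub_add_right]
  exact (IH _ _ (hH.comp_embedding e) g hg hdg).trans
    (Set.ncard_le_ncard hsub (hH.intersectionSet_finite.subset fun x hx => hx.1))

theorem choose_le_ncard_inter_hyperplane {d t : ℕ} (IH : HasNonvanishingBound F m d t)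
    {a : Fin (t + 1) → Fin (m + 1) → F} {b : Fin (t + 1) → F}
    (hH : IsGeneralPosition (fun i => hyperplane (a i) (b i)) (m + 1)) {i₀ : Fin (t + 1)}
    (ha : a i₀ ≠ 0) {f : MvPolynomial (Fin (m + 1)) F} (hdvd : ¬affineForm (a i₀) (b i₀) ∣ f)
    (hd : f.totalDegree ≤ d) :
    (t - d).choose m ≤
      ({x ∈ intersectionSet (fun i => hyperplane (a i) (b i)) (m + 1) | eval x f ≠ 0} ∩
        hyperplane (a i₀) (b i₀)).ncard := by
  obtain ⟨j, hj⟩ := Function.ne_iff.1 ha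
  set e := Fin.succAboveEmb i₀
  have he : ∀ r, e r ≠ i₀ := Fin.succAbove_ne i₀
  set φ := hyperplaneParam (a i₀) (b i₀) j
  have hrange := range_hyperplaneParam hj (b i₀)
  set a' : Fin t → Fin m → F :=
    fun r k => a (e r) (j.succAbove k) - a (e r) j / a i₀ j * a i₀ (j.succAbove k)
  set b' : Fin t → F := fun r => b (e r) - a (e r) j / a i₀ j * b i₀
  have hpreimage : (fun r => φ ⁻¹' hyperplane (a (e r)) (b (e r))) =
      fun r => hyperplane (a' r) (b' r) :=
    funext fun r => preimage_hyperplaneParam_hyperplane _ _ _ _ _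
  have hH' : IsGeneralPosition (fun r => hyperplane (a' r) (b' r)) m :=
    hpreimage ▸ hH.preimage_comp e he (hyperplaneParam_injective _ _ _) hrange
  set f' := restrictHyperplane (a i₀) (b i₀) j f
  have himage :
      φ '' {y ∈ intersectionSet (fun r => hyperplane (a' r) (b' r)) m | eval y f' ≠ 0} ⊆
      {x ∈ intersectionSet (fun i => hyperplane (a i) (b i)) (m + 1) | eval x f ≠ 0} ∩
        hyperplane (a i₀) (b i₀) := by
    rintro _ ⟨y, ⟨hyT, hy⟩, rfl⟩
    rw [← hpreimage] at hyT
    obtain ⟨hxT, hxH⟩ := image_intersectionSet_preimage_subset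
      (H := fun i => hyperplane (a i) (b i)) e he hrange.le m ⟨y, hyT, rfl⟩
    exact ⟨⟨hxT, by rwa [eval_hyperplaneParam]⟩, hxH⟩
  calc (t - d).choose m
      ≤ {y ∈ intersectionSet (fun r => hyperplane (a' r) (b' r)) m | eval y f' ≠ 0}.ncard :=
        IH _ _ hH' f' (restrictHyperplane_ne_zero hj hdvd)
          ((totalDegree_restrictHyperplane_le _ _ _ f).trans hd)
    _ = (φ '' _).ncard := (Set.ncard_image_of_injective _ (hyperplaneParam_injective _ _ _)).symm
    _ ≤ _ := Set.ncard_le_ncard himage (hH.intersectionSet_finite.subset fun x hx => hx.1.1)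

theorem choose_le_ncard_of_forall_not_dvd {d t : ℕ} (IH : HasNonvanishingBound F m d t)
    {a : Fin (t + 1) → Fin (m + 1) → F} {b : Fin (t + 1) → F}
    (hH : IsGeneralPosition (fun i => hyperplane (a i) (b i)) (m + 1)) (ha : ∀ i, a i ≠ 0)
    {f : MvPolynomial (Fin (m + 1)) F} (hdvd : ∀ i, ¬affineForm (a i) (b i) ∣ f)
    (hd : f.totalDegree ≤ d) (hdt : d ≤ t) :
    (t + 1 - d).choose (m + 1) ≤
      {x ∈ intersectionSet (fun i => hyperplane (a i) (b i)) (m + 1) | eval x f ≠ 0}.ncard := by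
  have hcount := hH.card_mul_le_mul_ncard (hH.intersectionSet_finite.subset fun x hx => hx.1)
    fun i => choose_le_ncard_inter_hyperplane IH hH (ha i) (hdvd i) hd
  rw [Fintype.card_fin] at hcount
  refine Nat.le_of_mul_le_mul_left ?_ m.succ_pos
  calc (m + 1) * (t + 1 - d).choose (m + 1) = (t + 1 - d) * (t - d).choose m := by
        rw [show t + 1 - d = t - d + 1 by omega, Nat.add_one_mul_choose_eq, mul_comm]
    _ ≤ (t + 1) * (t - d).choose m := Nat.mul_le_mul_right _ (Nat.sub_le _ _)
    _ ≤ _ := hcount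

theorem hasNonvanishingBound {m d t : ℕ} (h : m + d < t) : HasNonvanishingBound F m d t := by
  induction t generalizing m d with
  | zero => omega
  | succ t IH =>
    intro a b hH f hf hd
    by_cases h0 : f.totalDegree = 0
    · simpa using choose_le_ncard_of_totalDegree_eq_zero hH hf h0 d
    have hm : m ≠ 0 := by
      rintro rfl
      exact h0 (by rw [f.eq_C_of_isEmpty, totalDegree_C])
    obtain ⟨m, rfl⟩ : ∃ m', m = m' + 1 := ⟨m - 1, by omega⟩
    obtain ⟨d, rfl⟩ : ∃ d', d = d' + 1 := ⟨d - 1, by omega⟩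
    have ha : ∀ i, a i ≠ 0 := hH.normal_ne_zero (by omega) (by omega)
    by_cases hdvd : ∃ i, affineForm (a i) (b i) ∣ f
    · obtain ⟨i, hi⟩ := hdvd
      exact choose_le_ncard_of_dvd (IH (by omega)) hH (ha i) hf hi hd
    · exact choose_le_ncard_of_forall_not_dvd (IH (by omega)) hH ha (not_exists.1 hdvd) hd
        (by omega)

end Hyperplane

theorem stmt_2_general {F : Type*} [Field F] (m d t : ℕ) (ht : m + d < t)
    (a : Fin t → Fin m → F) (b : Fin t → F)
    (H : Fin t → Set (Fin m → F))
    (hH : ∀ i, H i = {x | ∑ j, a i j * x j = b i})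
    (hgen1 : ∀ s : Finset (Fin t), s.card = m → ∃! x : Fin m → F, ∀ i ∈ s, x ∈ H i)
    (hgen2 : ∀ s : Finset (Fin t), s.card = m + 1 → ¬ ∃ x : Fin m → F, ∀ i ∈ s, x ∈ H i)
    (T : Set (Fin m → F))
    (hT : T = {x | ∃ s : Finset (Fin t), s.card = m ∧ ∀ i ∈ s, x ∈ H i}) :
    (∀ f : MvPolynomial (Fin m) F, f ≠ 0 → f.totalDegree ≤ d →
      ((t - d).choose m : ℕ∞) ≤ {x ∈ T | MvPolynomial.eval x f ≠ 0}.encard) ∧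
    (∀ f g : MvPolynomial (Fin m) F, f.totalDegree ≤ d → g.totalDegree ≤ d → f ≠ g →
      ((t - d).choose m : ℕ∞) ≤
        {x ∈ T | MvPolynomial.eval x f ≠ MvPolynomial.eval x g}.encard) := by
  obtain rfl : T = intersectionSet H m := hT
  have hgp : IsGeneralPosition H m := ⟨hgen1, hgen2⟩
  have hnonzero (f : MvPolynomial (Fin m) F) (hf : f ≠ 0) (hd : f.totalDegree ≤ d) :
      ((t - d).choose m : ℕ∞) ≤ {x ∈ intersectionSet H m | eval x f ≠ 0}.encard := by
    rw [← (hgp.intersectionSet_finite.subset fun x hx => hx.1).cast_ncard_eq]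
    obtain rfl : H = fun i => hyperplane (a i) (b i) := funext hH
    exact_mod_cast hasNonvanishingBound ht a b hgp f hf hd
  refine ⟨hnonzero, fun f g hf hg hfg => ?_⟩
  simpa only [map_sub, sub_ne_zero] using
    hnonzero (f - g) (sub_ne_zero.2 hfg) ((totalDegree_sub f g).trans (max_le hf hg))

/-- GAP codes have distance at least `binom(t-d, m)`: every nonzero
polynomial of total degree at most `d` is nonzero at at least `binom(t-d, m)` of the
`m`-wise intersection points of `t > m + d` hyperplanes in general position; hence the
evaluation code on these points has minimum Hamming distance at least `binom(t-d, m)`. -/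
theorem stmt_2 {F : Type*} [Field F] (m d t : ℕ) (ht : m + d < t)
    (a : Fin t → Fin m → F) (b : Fin t → F) (ha : ∀ i, a i ≠ 0)
    (H : Fin t → Set (Fin m → F))
    (hH : ∀ i, H i = {x | ∑ j, a i j * x j = b i})
    (hgen1 : ∀ s : Finset (Fin t), s.card = m → ∃! x : Fin m → F, ∀ i ∈ s, x ∈ H i)
    (hgen2 : ∀ s : Finset (Fin t), s.card = m + 1 → ¬ ∃ x : Fin m → F, ∀ i ∈ s, x ∈ H i)
    (T : Set (Fin m → F))
    (hT : T = {x | ∃ s : Finset (Fin t), s.card = m ∧ ∀ i ∈ s, x ∈ H i}) :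
    (∀ f : MvPolynomial (Fin m) F, f ≠ 0 → f.totalDegree ≤ d →
      ((t - d).choose m : ℕ∞) ≤ {x ∈ T | MvPolynomial.eval x f ≠ 0}.encard) ∧
    (∀ f g : MvPolynomial (Fin m) F, f.totalDegree ≤ d → g.totalDegree ≤ d → f ≠ g →
      ((t - d).choose m : ℕ∞) ≤
        {x ∈ T | MvPolynomial.eval x f ≠ MvPolynomial.eval x g}.encard) :=
  stmt_2_general m d t ht a b H hH hgen1 hgen2 T hT
end

section
/- Let m, D be natural numbers and let F be a field whose characteristic is zero or greater than D. Let S ⊆ F^m be the image of {x ∈ ℕ^m : x₁ + ⋯ + x_m ≤ D} under the coordinatewise natural map ℕ → F (sending k to k·1_F). Then |S| = binom(m+D, m) and S is a hitting set for m-variate polynomials of degree D: every nonzero polynomial in F[X₁,…,X_m] of total degree at most D is nonzero at some point of S. -/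
open MvPolynomial

lemma cast_inj_aux {F : Type*} [Field F] {D : ℕ}
    (hchar : ringChar F = 0 ∨ D < ringChar F) :
    ∀ {a b : ℕ}, a ≤ D → b ≤ D → (a : F) = (b : F) → a = b := by
  have key : ∀ {a b : ℕ}, a ≤ b → b ≤ D → (a : F) = (b : F) → a = b := by
    intro a b hab hbD h
    have h0 : ((b - a : ℕ) : F) = 0 := by
      rw [Nat.cast_sub hab, h, sub_self]
    have := (CharP.cast_eq_zero_iff F (ringChar F) (b - a)).mp h0
    rcases hchar with hc | hc
    · rw [hc] at this
      omega
    · have : b - a = 0 := Nat.eq_zero_of_dvd_of_lt this (by omega)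
      omega
  intro a b ha hb h
  rcases le_total a b with hab | hab
  · exact key hab hb h
  · exact (key hab ha h.symm).symm

lemma hitting_aux {F : Type*} [Field F] :
    ∀ (m D : ℕ), (ringChar F = 0 ∨ D < ringChar F) →
    ∀ f : MvPolynomial (Fin m) F, f ≠ 0 → f.totalDegree ≤ D →
    ∃ x : Fin m → ℕ, (∑ i, x i ≤ D) ∧
      MvPolynomial.eval (fun i => ((x i : ℕ) : F)) f ≠ 0 := by
  intro m
  induction m with
  | zero =>
    intro D _ f hf _
    obtain ⟨c, rfl⟩ := MvPolynomial.C_surjective (Fin 0) f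
    exact ⟨fun _ => 0, by simp, by simpa using fun h => hf (by rw [h, map_zero])⟩
  | succ n ih =>
    classical
    intro D hchar f hf hdeg
    set g := finSuccEquiv F n f with hg
    have hgne : g ≠ 0 := by
      intro h0
      apply hf
      have := congrArg (finSuccEquiv F n).symm (h0.trans (map_zero (finSuccEquiv F n)).symm)
      simpa [hg] using this
    set d := g.natDegree with hd
    have hcne : g.coeff d ≠ 0 := by
      simpa [hd, Polynomial.coeff_natDegree] using Polynomial.leadingCoeff_ne_zero.mpr hgne
    have hdle : (g.coeff d).totalDegree + d ≤ D :=
      le_trans (totalDegree_coeff_finSuccEquiv_add_le f d hcne) hdeg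
    have hchar' : ringChar F = 0 ∨ D - d < ringChar F := by
      rcases hchar with h | h
      · exact Or.inl h
      · exact Or.inr (lt_of_le_of_lt (Nat.sub_le _ _) h)
    obtain ⟨x', hx'sum, hx'⟩ := ih (D - d) hchar' (g.coeff d) hcne (by omega)
    set s : Fin n → F := fun i => ((x' i : ℕ) : F) with hs
    set p : Polynomial F := g.map (MvPolynomial.eval s) with hp
    have hpd : p.coeff d ≠ 0 := by
      rw [hp, Polynomial.coeff_map]; exact hx'
    have hpdeg : p.natDegree ≤ d := Polynomial.natDegree_map_le
    -- find k ≤ d with p.eval k ≠ 0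
    have hdD : d ≤ D := by omega
    have : ∃ k ≤ d, Polynomial.eval ((k : ℕ) : F) p ≠ 0 := by
      by_contra hcon
      push_neg at hcon
      have hp0 : p = 0 := by
        apply Polynomial.eq_zero_of_natDegree_lt_card_of_eval_eq_zero' p
          ((Finset.range (d + 1)).image (fun k => ((k : ℕ) : F)))
        · intro i hi
          simp only [Finset.mem_image, Finset.mem_range] at hi
          obtain ⟨k, hk, rfl⟩ := hi
          exact hcon k (by omega)
        · rw [Finset.card_image_of_injOn, Finset.card_range]
          · omega
          · intro a ha b hb hab
            simp only [Finset.coe_range, Set.mem_Iio] at ha hb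
            exact cast_inj_aux hchar (by omega) (by omega) hab
      rw [hp0] at hpd
      simp at hpd
    obtain ⟨k, hk, hpk⟩ := this
    refine ⟨Fin.cons k x', ?_, ?_⟩
    · rw [Fin.sum_univ_succ]
      simp only [Fin.cons_zero, Fin.cons_succ]
      omega
    · have hcast : (fun i => (((Fin.cons k x' : Fin (n+1) → ℕ) i : ℕ) : F))
          = Fin.cons ((k : ℕ) : F) s := by
        funext i
        refine Fin.cases ?_ (fun j => ?_) i <;> simp [hs]
      rw [hcast, eval_eq_eval_mv_eval']
      exact hpk

def padEquiv (m D : ℕ) : {x : Fin m → ℕ // ∑ i, x i ≤ D} ≃ {P : Fin (m+1) → ℕ // ∑ i, P i = D} where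
  toFun x := ⟨Fin.snoc x.1 (D - ∑ i, x.1 i), by
    rw [Fin.sum_univ_castSucc]
    simp only [Fin.snoc_castSucc, Fin.snoc_last]
    have := x.2; omega⟩
  invFun y := ⟨fun i => y.1 i.castSucc, by
    show ∑ i : Fin m, y.1 i.castSucc ≤ D
    have := y.2; rw [Fin.sum_univ_castSucc] at this; omega⟩
  left_inv x := by
    apply Subtype.ext; funext i
    show (Fin.snoc x.1 (D - ∑ i, x.1 i) : Fin (m+1) → ℕ) i.castSucc = x.1 i
    rw [Fin.snoc_castSucc]
  right_inv y := by
    apply Subtype.ext; funext i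
    refine Fin.lastCases ?_ (fun j => ?_) i
    · show (Fin.snoc (fun i => (y.1 i.castSucc : ℕ)) (D - ∑ i : Fin m, y.1 i.castSucc) :
        Fin (m+1) → ℕ) (Fin.last m) = y.1 (Fin.last m)
      rw [Fin.snoc_last]
      have := y.2; rw [Fin.sum_univ_castSucc] at this
      omega
    · show (Fin.snoc (fun i => (y.1 i.castSucc : ℕ)) (D - ∑ i : Fin m, y.1 i.castSucc) :
        Fin (m+1) → ℕ) j.castSucc = y.1 j.castSucc
      rw [Fin.snoc_castSucc]

lemma simplex_encard (m D : ℕ) :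
    {x : Fin m → ℕ | ∑ i, x i ≤ D}.encard = ((m + D).choose m : ℕ∞) := by
  classical
  have e : {x : Fin m → ℕ // ∑ i, x i ≤ D} ≃ Sym (Fin (m+1)) D :=
    (padEquiv m D).trans (Sym.equivNatSumOfFintype (Fin (m+1)) D).symm
  haveI : Fintype {x : Fin m → ℕ // ∑ i, x i ≤ D} := Fintype.ofEquiv _ e.symm
  haveI : Fintype ↥{x : Fin m → ℕ | ∑ i, x i ≤ D} := by
    apply Fintype.ofEquiv {x : Fin m → ℕ // ∑ i, x i ≤ D} (Equiv.refl _)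
  have hcard : Fintype.card ↥{x : Fin m → ℕ | ∑ i, x i ≤ D} = (m + D).choose m := by
    have e' : ↥{x : Fin m → ℕ | ∑ i, x i ≤ D} ≃ Sym (Fin (m+1)) D := e
    rw [Fintype.card_congr e', Sym.card_sym_eq_choose, Fintype.card_fin,
      show m + 1 + D - 1 = m + D by omega, ← Nat.choose_symm (by omega : m ≤ m + D),
      show m + D - m = D by omega]
  rw [Set.encard_eq_coe_toFinset_card, Set.toFinset_card, hcard]

/-- The simplex `{x ∈ ℕ^m : x₁ + ⋯ + x_m ≤ D}`, embedded coordinatewise into a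
field of characteristic zero or greater than `D`, has size `binom(m+D, m)` and is a hitting
set for `m`-variate polynomials of total degree at most `D`. -/
theorem stmt_4 {F : Type*} [Field F] (m D : ℕ)
    (hchar : ringChar F = 0 ∨ D < ringChar F)
    (S : Set (Fin m → F))
    (hS : S = (fun x : Fin m → ℕ => fun i => ((x i : ℕ) : F)) '' {x | ∑ i, x i ≤ D}) :
    S.encard = ((m + D).choose m : ℕ∞) ∧
    ∀ f : MvPolynomial (Fin m) F, f ≠ 0 → f.totalDegree ≤ D →
      ∃ a ∈ S, MvPolynomial.eval a f ≠ 0 := by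
  subst hS
  constructor
  · have hinj : Set.InjOn (fun x : Fin m → ℕ => fun i => ((x i : ℕ) : F))
        {x | ∑ i, x i ≤ D} := by
      intro x hx y hy h
      funext i
      have hxi : x i ≤ D :=
        le_trans (Finset.single_le_sum (fun j _ => Nat.zero_le _) (Finset.mem_univ i)) hx
      have hyi : y i ≤ D :=
        le_trans (Finset.single_le_sum (fun j _ => Nat.zero_le _) (Finset.mem_univ i)) hy
      exact cast_inj_aux hchar hxi hyi (congrFun h i)
    rw [Set.InjOn.encard_image hinj, simplex_encard]
  · intro f hf hd
    obtain ⟨x, hx, hev⟩ := hitting_aux m D hchar f hf hd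
    exact ⟨_, ⟨x, hx, rfl⟩, hev⟩
end

section
/- Let m, d, ℓ be natural numbers with ℓ > d and m ≥ 1, let F be a field, and let a₀, a₁, …, a_{ℓ−1} be ℓ distinct elements of F. Let S = {(a_{x₁}, …, a_{x_m}) : x ∈ ℕ^m, x₁ + ⋯ + x_m < ℓ} be the combinatorial simplex determined by this sequence. Then every nonzero polynomial f ∈ F[X₁,…,X_m] of total degree at most d is nonzero at at least binom(ℓ−d+m−1, m) points of S. Consequently, the linear code obtained by evaluating all m-variate polynomials of degree at most d on S has minimum Hamming distance at least binom(ℓ−d+m−1, m). -/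
/-! Induct on the number of variables, for a weighted count in which a point of the simplex of
size `L` is weighted by its number of extensions to a point of the simplex with `k` more
coordinates. Expand `f` in `X₀`, with degree `t` and leading coefficient `g`, so that
`deg g ≤ d - t`. Above each point `x'` of the simplex of size `L - t` where `g` does not vanish,
`f(X₀, a_{x'})` is a nonzero polynomial of degree at most `t`, so it vanishes at no more than `t`
of the `L - |x'|` points of the fibre. The weights decrease along the fibre, so at worst the `t`
heaviest points are lost, and by the hockey-stick identity the remaining weight is the weight of
`x'` with one more extra coordinate. This reduces the bound for `f` to the bound for `g`, in one
variable fewer. -/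

section

open MvPolynomial Finset
open scoped Classical

theorem sum_Ico_sub_add_choose (k : ℕ) {t M : ℕ} (htM : t ≤ M) :
    ∑ j ∈ Ico t M, (M - 1 - j + k).choose k = (M - t + k).choose (k + 1) := by
  obtain ⟨n, rfl⟩ := Nat.exists_eq_add_of_le htM
  rw [sum_Ico_eq_sum_range, Nat.add_sub_cancel_left]
  rcases n with _ | n
  · simp
  · rw [show n + 1 + k = n + k + 1 by omega, ← Nat.sum_range_add_choose, ← sum_range_reflect]
    refine sum_congr rfl fun r hr => ?_
    rw [mem_range] at hr
    congr 1
    omega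

theorem sum_Ico_le_sum_of_antitone {w : ℕ → ℕ} (hw : Antitone w) {G : Finset ℕ} {t M : ℕ}
    (htM : t ≤ M) (hG : G ⊆ range M) (hc : #(range M \ G) ≤ t) :
    ∑ j ∈ Ico t M, w j ≤ ∑ j ∈ G, w j := by
  have hsplit : range M \ G = (range t \ G) ∪ (Ico t M \ G) := by
    rw [← union_sdiff_distrib, range_eq_Ico, range_eq_Ico,
      Ico_union_Ico_eq_Ico (Nat.zero_le t) htM]
  have hdisj : Disjoint (range t \ G) (Ico t M \ G) := by
    rw [range_eq_Ico]
    exact (Ico_disjoint_Ico_consecutive 0 t M).mono sdiff_subset sdiff_subset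
  have hcard : #(Ico t M \ G) ≤ #(G ∩ range t) := by
    have := card_sdiff_add_card_inter (range t) G
    rw [hsplit, card_union_of_disjoint hdisj] at hc
    rw [card_range] at this
    rw [inter_comm]
    omega
  have hG_split : G \ range t = Ico t M ∩ G := by
    ext j
    have := @hG j
    simp only [mem_sdiff, mem_range, mem_inter, mem_Ico] at this ⊢
    grind
  calc ∑ j ∈ Ico t M, w j = ∑ j ∈ Ico t M ∩ G, w j + ∑ j ∈ Ico t M \ G, w j :=
        (sum_inter_add_sum_sdiff _ _ _).symm
    _ ≤ ∑ j ∈ Ico t M ∩ G, w j + ∑ j ∈ G ∩ range t, w j := by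
        refine Nat.add_le_add_left ?_ _
        calc ∑ j ∈ Ico t M \ G, w j ≤ #(Ico t M \ G) * w t :=
              sum_le_card_nsmul _ _ _ fun j hj => hw (mem_Ico.mp (mem_sdiff.mp hj).1).1
          _ ≤ #(G ∩ range t) * w t := Nat.mul_le_mul_right _ hcard
          _ ≤ ∑ j ∈ G ∩ range t, w j :=
              card_nsmul_le_sum _ _ _ fun j hj => hw (mem_range.mp (mem_inter.mp hj).2).le
    _ = ∑ j ∈ G, w j := by rw [← hG_split, add_comm, sum_inter_add_sum_sdiff]

theorem Polynomial.card_le_natDegree_of_forall_isRoot {R ι : Type*} [CommRing R] [IsDomain R]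
    {a : ι → R} (ha : Function.Injective a) {q : Polynomial R} (hq : q ≠ 0) {s : Finset ι}
    (hs : ∀ j ∈ s, q.IsRoot (a j)) :
    #s ≤ q.natDegree := by
  rw [← card_image_of_injective _ ha]
  refine card_le_degree_of_subset_roots fun y hy => ?_
  obtain ⟨j, hj, rfl⟩ := mem_image.mp hy
  exact (mem_roots hq).mpr (hs j hj)

variable {F : Type*} [Field F] {ℓ : ℕ} {a : Fin ℓ → F}

theorem choose_le_sum_filter_eval_ne_zero (ha : Function.Injective a) {q : Polynomial F}
    (hq : q ≠ 0) {t M : ℕ} (hqt : q.natDegree ≤ t) (htM : t ≤ M) (hM : M ≤ ℓ) (k : ℕ) :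
    (M - t + k).choose (k + 1) ≤
      ∑ j ∈ univ.filter fun j : Fin ℓ => ↑j < M ∧ q.eval (a j) ≠ 0, (M - 1 - j + k).choose k := by
  set G := univ.filter fun j : Fin ℓ => ↑j < M ∧ q.eval (a j) ≠ 0
  set Z := univ.filter fun j : Fin ℓ => ↑j < M ∧ q.IsRoot (a j)
  have hZ : #Z ≤ t :=
    (q.card_le_natDegree_of_forall_isRoot ha hq fun j hj => (mem_filter.mp hj).2.2).trans hqt
  have hcompl : range M \ G.map Fin.valEmbedding ⊆ Z.map Fin.valEmbedding := by
    intro n hn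
    obtain ⟨hnM, hnG⟩ := mem_sdiff.mp hn
    rw [mem_range] at hnM
    refine mem_map.mpr ⟨⟨n, by omega⟩, mem_filter.mpr ⟨mem_univ _, hnM, ?_⟩, rfl⟩
    by_contra hne
    exact hnG (mem_map.mpr ⟨⟨n, by omega⟩, mem_filter.mpr ⟨mem_univ _, hnM, hne⟩, rfl⟩)
  rw [← sum_Ico_sub_add_choose k htM]
  refine le_of_le_of_eq (sum_Ico_le_sum_of_antitone
    (fun i j hij => Nat.choose_le_choose k (by omega)) htM (fun j hj => ?_) ?_)
    (sum_map _ Fin.valEmbedding fun j : ℕ => (M - 1 - j + k).choose k)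
  · obtain ⟨i, hi, rfl⟩ := mem_map.mp hj
    exact mem_range.mpr (mem_filter.mp hi).2.1
  · exact (card_le_card hcompl).trans ((card_map _).trans_le hZ)

variable (a) in
/-- `(L - 1 - |x| + k).choose k` is the number of `y ∈ ℕ^k` with `|x| + |y| < L`, so this counts
the nonzeros of `f`, regarded as a polynomial in `m + k` variables, on the simplex of size `L`. -/
noncomputable def weightedNonzeroCount {m : ℕ} (L k : ℕ) (f : MvPolynomial (Fin m) F) : ℕ :=
  ∑ x ∈ univ.filter fun x : Fin m → Fin ℓ => ∑ i, (x i : ℕ) < L ∧ eval (a ∘ x) f ≠ 0,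
    (L - 1 - ∑ i, (x i : ℕ) + k).choose k

theorem weightedNonzeroCount_leadingCoeff_le (ha : Function.Injective a) {m L : ℕ}
    (hL : L ≤ ℓ) (k : ℕ) (f : MvPolynomial (Fin (m + 1)) F) :
    weightedNonzeroCount a (L - (finSuccEquiv F m f).natDegree) (k + 1)
        (finSuccEquiv F m f).leadingCoeff ≤
      weightedNonzeroCount a L k f := by
  set p := finSuccEquiv F m f
  set t := p.natDegree
  unfold weightedNonzeroCount
  rw [sum_filter, sum_filter, ← (Fin.consEquiv fun _ => Fin ℓ).sum_comp, Fintype.sum_prod_type,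
    sum_comm]
  refine sum_le_sum fun x _ => ?_
  split_ifs with hx
  · obtain ⟨hxL, hgx⟩ := hx
    have hq : p.map (eval (a ∘ x)) ≠ 0 := fun h => hgx <| by
      rw [Polynomial.leadingCoeff, ← Polynomial.coeff_map, h, Polynomial.coeff_zero]
    set q := p.map (eval (a ∘ x))
    calc (L - t - 1 - ∑ i, (x i : ℕ) + (k + 1)).choose (k + 1)
        = (L - ∑ i, (x i : ℕ) - t + k).choose (k + 1) := by congr 1; omega
      _ ≤ ∑ j ∈ univ.filter fun j : Fin ℓ => ↑j < L - ∑ i, (x i : ℕ) ∧ q.eval (a j) ≠ 0,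
            (L - ∑ i, (x i : ℕ) - 1 - j + k).choose k :=
          choose_le_sum_filter_eval_ne_zero ha hq Polynomial.natDegree_map_le (by omega)
            (by omega) k
      _ = _ := by
          rw [sum_filter]
          refine sum_congr rfl fun j _ => ?_
          have hcons : a ∘ Fin.consEquiv (fun _ => Fin ℓ) (j, x) = Fin.cons (a j) (a ∘ x) :=
            Fin.comp_cons a j x
          rw [hcons, eval_eq_eval_mv_eval']
          simp only [Fin.consEquiv_apply, Fin.sum_univ_succ, Fin.cons_zero, Fin.cons_succ,
            Nat.lt_sub_iff_add_lt]
          rw [show L - ∑ i, (x i : ℕ) - 1 - j + k = L - 1 - (j + ∑ i, (x i : ℕ)) + k by omega]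
  · exact Nat.zero_le _

theorem choose_le_weightedNonzeroCount (ha : Function.Injective a) {m : ℕ}
    {f : MvPolynomial (Fin m) F} (hf : f ≠ 0) {d L : ℕ} (hdeg : f.totalDegree ≤ d) (hd : d < L)
    (hL : L ≤ ℓ) (k : ℕ) :
    (L - d - 1 + (m + k)).choose (m + k) ≤ weightedNonzeroCount a L k f := by
  induction m generalizing k d L with
  | zero =>
    obtain ⟨c, rfl⟩ := C_surjective (Fin 0) f
    have hc : c ≠ 0 := by rintro rfl; exact hf C_0
    simp only [weightedNonzeroCount, zero_add, univ_eq_empty, sum_empty, show 0 < L by omega,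
      eval_C, ne_eq, hc, not_false_eq_true, and_self, filter_true, univ_unique, tsub_zero,
      sum_const, card_singleton, smul_eq_mul, one_mul, ge_iff_le]
    exact Nat.choose_le_choose k (by omega)
  | succ m ih =>
    set p := finSuccEquiv F m f
    have hp : p ≠ 0 := (map_ne_zero_iff _ (finSuccEquiv F m).injective).mpr hf
    have hg : p.leadingCoeff ≠ 0 := Polynomial.leadingCoeff_ne_zero.mpr hp
    have hgdeg : p.leadingCoeff.totalDegree + p.natDegree ≤ d :=
      (totalDegree_coeff_finSuccEquiv_add_le f _ hg).trans hdeg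
    calc (L - d - 1 + (m + 1 + k)).choose (m + 1 + k)
        = (L - p.natDegree - (d - p.natDegree) - 1 + (m + (k + 1))).choose (m + (k + 1)) := by
          congr 1 <;> omega
      _ ≤ weightedNonzeroCount a (L - p.natDegree) (k + 1) p.leadingCoeff :=
          ih hg (by omega) (by omega) (by omega) (k + 1)
      _ ≤ weightedNonzeroCount a L k f := weightedNonzeroCount_leadingCoeff_le ha hL k f

variable (a) in
def combinatorialSimplex (m : ℕ) : Set (Fin m → F) :=
  {p | ∃ x : Fin m → Fin ℓ, ∑ i, (x i : ℕ) < ℓ ∧ p = fun i => a (x i)}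

theorem choose_le_encard_nonzeros (ha : Function.Injective a) {m d : ℕ} (hd : d < ℓ)
    {f : MvPolynomial (Fin m) F} (hf : f ≠ 0) (hdeg : f.totalDegree ≤ d) :
    ((ℓ - d + m - 1).choose m : ℕ∞) ≤ {p ∈ combinatorialSimplex a m | eval p f ≠ 0}.encard := by
  have hnonzeros : {p ∈ combinatorialSimplex a m | eval p f ≠ 0} = (a ∘ ·) ''
      ↑(univ.filter fun x : Fin m → Fin ℓ => ∑ i, (x i : ℕ) < ℓ ∧ eval (a ∘ x) f ≠ 0) := by
    ext p
    constructor
    · rintro ⟨⟨x, hx, rfl⟩, hfx⟩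
      exact ⟨x, mem_filter.mpr ⟨mem_univ x, hx, hfx⟩, rfl⟩
    · rintro ⟨x, hx, rfl⟩
      exact ⟨⟨x, (mem_filter.mp hx).2.1, rfl⟩, (mem_filter.mp hx).2.2⟩
  have key := choose_le_weightedNonzeroCount ha hf hdeg hd le_rfl 0
  simp only [weightedNonzeroCount, Nat.choose_zero_right, sum_const, smul_eq_mul, mul_one,
    add_zero] at key
  rw [hnonzeros, ha.comp_left.encard_image, Set.encard_coe_eq_coe_finsetCard,
    show ℓ - d + m - 1 = ℓ - d - 1 + m by omega]
  exact_mod_cast key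

end

theorem stmt_5_general {F : Type*} [Field F] (m d ℓ : ℕ) (hd : d < ℓ)
    (a : Fin ℓ → F) (ha : Function.Injective a)
    (S : Set (Fin m → F))
    (hS : S = {p | ∃ x : Fin m → Fin ℓ, (∑ i, (x i : ℕ)) < ℓ ∧ p = fun i => a (x i)}) :
    (∀ f : MvPolynomial (Fin m) F, f ≠ 0 → f.totalDegree ≤ d →
      ((ℓ - d + m - 1).choose m : ℕ∞) ≤ {p ∈ S | MvPolynomial.eval p f ≠ 0}.encard) ∧
    (∀ f g : MvPolynomial (Fin m) F, f.totalDegree ≤ d → g.totalDegree ≤ d → f ≠ g →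
      ((ℓ - d + m - 1).choose m : ℕ∞) ≤
        {p ∈ S | MvPolynomial.eval p f ≠ MvPolynomial.eval p g}.encard) := by
  obtain rfl : S = combinatorialSimplex a m := hS
  refine ⟨fun f hf hdeg => choose_le_encard_nonzeros ha hd hf hdeg, fun f g hf hg hfg => ?_⟩
  have hdiff := choose_le_encard_nonzeros ha hd (sub_ne_zero.mpr hfg)
    ((MvPolynomial.totalDegree_sub f g).trans (max_le hf hg))
  simpa only [map_sub, sub_ne_zero] using hdiff

/-- CAP codes have distance at least `binom(ℓ-d+m-1, m)`: every nonzero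
polynomial of total degree at most `d < ℓ` is nonzero at at least `binom(ℓ-d+m-1, m)`
points of the combinatorial simplex determined by `ℓ` distinct field elements; hence the
evaluation code on the simplex has minimum Hamming distance at least `binom(ℓ-d+m-1, m)`. -/
theorem stmt_5 {F : Type*} [Field F] (m d ℓ : ℕ) (hm : 1 ≤ m) (hd : d < ℓ)
    (a : Fin ℓ → F) (ha : Function.Injective a)
    (S : Set (Fin m → F))
    (hS : S = {p | ∃ x : Fin m → Fin ℓ, (∑ i, (x i : ℕ)) < ℓ ∧ p = fun i => a (x i)}) :
    (∀ f : MvPolynomial (Fin m) F, f ≠ 0 → f.totalDegree ≤ d →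
      ((ℓ - d + m - 1).choose m : ℕ∞) ≤ {p ∈ S | MvPolynomial.eval p f ≠ 0}.encard) ∧
    (∀ f g : MvPolynomial (Fin m) F, f.totalDegree ≤ d → g.totalDegree ≤ d → f ≠ g →
      ((ℓ - d + m - 1).choose m : ℕ∞) ≤
        {p ∈ S | MvPolynomial.eval p f ≠ MvPolynomial.eval p g}.encard) :=
  stmt_5_general m d ℓ hd a ha S hS
end

section
/- Let m ≥ 1, let S ⊆ ℕ^m be downward closed, let Z ⊆ ℕ^m be a finite set, and let i ∈ {1,…,m}. Define the shift σᵢ(Z) to be the unique set whose slice in direction i at each x ∈ ℕ^{m−1} is the initial segment {0, 1, …, |Z_{x,i}|−1}, where Z_{x,i} = {a ∈ ℕ : (x₁,…,x_{i−1}, a, x_i,…,x_{m−1}) ∈ Z} is the slice of Z at x in direction i. Then |S ∩ Z| ≤ |S ∩ σᵢ(Z)|. -/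
/-- Shifting a finite set `Z ⊆ ℕ^m` in direction `i` (replacing each slice in
direction `i` by the initial segment of the same size) does not decrease the size of its
intersection with a downward closed set `S`. -/
theorem stmt_6 (m : ℕ) (hm : 1 ≤ m) (S Z : Set (Fin m → ℕ))
    (hS : ∀ y ∈ S, ∀ x : Fin m → ℕ, (∀ j, x j ≤ y j) → x ∈ S)
    (hZ : Z.Finite) (i : Fin m)
    (σZ : Set (Fin m → ℕ))
    (hσ : σZ = {y | y i < {c : ℕ | Function.update y i c ∈ Z}.ncard}) :
    (S ∩ Z).encard ≤ (S ∩ σZ).encard := by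
  classical
  subst hσ
  set A : (Fin m → ℕ) → Set ℕ := fun y => {c : ℕ | Function.update y i c ∈ Z} with hA
  have hAfin : ∀ y, (A y).Finite := by
    intro y
    apply Set.Finite.preimage _ hZ
    intro a _ b _ hab
    have := congrArg (fun g => g i) hab
    simpa using this
  set f : (Fin m → ℕ) → (Fin m → ℕ) :=
    fun y => Function.update y i ({c ∈ A y | c < y i}.ncard) with hf
  have hAsame : ∀ y c, A (Function.update y i c) = A y := by
    intro y c
    ext d
    simp [hA, Function.update_idem]
  have hrank_le : ∀ y : Fin m → ℕ, {c ∈ A y | c < y i}.ncard ≤ y i := by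
    intro y
    have h1 : {c ∈ A y | c < y i} ⊆ ↑(Finset.range (y i)) := by
      intro c hc; simpa using hc.2
    calc {c ∈ A y | c < y i}.ncard ≤ (↑(Finset.range (y i)) : Set ℕ).ncard :=
          Set.ncard_le_ncard h1 (Finset.range (y i)).finite_toSet
      _ = y i := by rw [Set.ncard_coe_finset, Finset.card_range]
  have hmem : ∀ y : Fin m → ℕ, y ∈ Z → y i ∈ A y := by
    intro y hy
    simp [hA, Function.update_eq_self, hy]
  have hrank_lt : ∀ y : Fin m → ℕ, y ∈ Z → {c ∈ A y | c < y i}.ncard < (A y).ncard := by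
    intro y hy
    apply Set.ncard_lt_ncard _ (hAfin y)
    constructor
    · intro c hc; exact hc.1
    · intro h
      exact absurd ((h (hmem y hy)).2) (lt_irrefl _)
  -- strict monotonicity of rank on A y
  have hmono : ∀ y : Fin m → ℕ, ∀ a ∈ A y, ∀ b ∈ A y, a < b →
      {c ∈ A y | c < a}.ncard < {c ∈ A y | c < b}.ncard := by
    intro y a ha b hb hab
    apply Set.ncard_lt_ncard _ ((hAfin y).subset (fun c hc => hc.1))
    constructor
    · intro c hc; exact ⟨hc.1, hc.2.trans hab⟩
    · intro h
      exact absurd ((h ⟨ha, hab⟩).2) (lt_irrefl _)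
  have hmaps : S ∩ Z ⊆ f ⁻¹' (S ∩ {y | y i < (A y).ncard}) := by
    rintro y ⟨hyS, hyZ⟩
    constructor
    · apply hS y hyS
      intro j
      by_cases hj : j = i
      · subst hj; simpa [hf] using hrank_le y
      · simp [hf, Function.update_of_ne hj]
    · show (f y) i < (A (f y)).ncard
      rw [hf]
      simp only [Function.update_self]
      rw [show A (Function.update y i {c ∈ A y | c < y i}.ncard) = A y from hAsame y _]
      exact hrank_lt y hyZ
  have hinj : Set.InjOn f (S ∩ Z) := by
    rintro y ⟨_, hyZ⟩ z ⟨_, hzZ⟩ hyz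
    have hoff : ∀ j, j ≠ i → y j = z j := by
      intro j hj
      have := congrArg (fun g => g j) hyz
      simpa [hf, Function.update_of_ne hj] using this
    have hAyz : A y = A z := by
      have : ∀ c : ℕ, Function.update y i c = Function.update z i c := by
        intro c
        funext j
        by_cases hj : j = i
        · subst hj; simp
        · simp [Function.update_of_ne hj, hoff j hj]
      ext c
      simp [hA, this c]
    have hrk : {c ∈ A z | c < y i}.ncard = {c ∈ A z | c < z i}.ncard := by
      have h0 := congrArg (fun g => g i) hyz
      simp only [hf, Function.update_self] at h0
      rwa [show {c ∈ A y | c < y i} = {c ∈ A z | c < y i} from by rw [hAyz]] at h0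
    have hyA : y i ∈ A z := hAyz ▸ hmem y hyZ
    have hi : y i = z i := by
      rcases lt_trichotomy (y i) (z i) with h | h | h
      · exact absurd hrk (ne_of_lt (hmono z (y i) hyA (z i) (hmem z hzZ) h))
      · exact h
      · exact absurd hrk.symm (ne_of_lt (hmono z (z i) (hmem z hzZ) (y i) hyA h))
    funext j
    by_cases hj : j = i
    · subst hj; exact hi
    · exact hoff j hj
  calc (S ∩ Z).encard = (f '' (S ∩ Z)).encard := (hinj.encard_image).symm
    _ ≤ (S ∩ {y | y i < (A y).ncard}).encard :=
        Set.encard_le_encard (Set.image_subset_iff.mpr hmaps)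
end

section
/- (Generalized Schwartz–Zippel lemma for downward closed sets.) Let F be a field, m, d, n natural numbers, u : {0,…,n−1} → F an injective map, and S ⊆ {0,…,n−1}^m a nonempty downward closed set. Suppose the d-robustness satisfies Π_d(S) ≥ δ·|S| for some δ ∈ [0,1]. Then for every nonzero polynomial f ∈ F[X₁,…,X_m] of total degree at most d, the number of points x ∈ S with f(u(x₁),…,u(x_m)) = 0 is at most (1−δ)·|S|; equivalently, f is nonzero at at least δ·|S| of the embedded points. -/
/-!
Weighted form of the Schwartz–Zippel argument: for an antitone weight `w` on the grid
`(Fin n)^m` and `f ≠ 0`, there is an exponent vector `e` with `∑ e ≤ deg f` such that the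
weight of the shifted orthant `H(e)` is at most the weight of the non-zeroes of `f`. By induction
on `m`, write `f = ∑ f_j X₀^j` with leading coefficient `f_t`; on every line where `f_t` does not
vanish, `f` has at most `t` zeroes, and since the weight is antitone along the line, the weight
of the non-zeroes is at least the weight of the points with first coordinate `≥ t`. The
induction hypothesis is applied to `f_t` with these line weights. Taking `w` the indicator of the
downward closed set `S` and padding `e` to total `d` yields the bound from the robustness.
-/

open Finset Polynomial

theorem Fintype.sum_fin_succ_pi {α M : Type*} [Fintype α] [AddCommMonoid M] {m : ℕ}
    (g : (Fin (m + 1) → α) → M) : ∑ x, g x = ∑ x : Fin m → α, ∑ a, g (Fin.cons a x) := by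
  rw [← (Fin.consEquiv fun _ => α).sum_comp, Fintype.sum_prod_type, sum_comm]
  rfl

section
variable {M : Type*} [AddCommMonoid M] [LinearOrder M] [IsOrderedAddMonoid M]
  [CanonicallyOrderedAdd M] [OrderBot M]

theorem Finset.sum_le_sum_of_card_le_of_forall_le {ι : Type*} {P Q : Finset ι} {v : ι → M}
    (hcard : #P ≤ #Q) (hle : ∀ p ∈ P, ∀ q ∈ Q, v p ≤ v q) : ∑ p ∈ P, v p ≤ ∑ q ∈ Q, v q :=
  calc ∑ p ∈ P, v p ≤ #P • P.sup v := sum_le_card_nsmul _ _ _ fun _ hp => le_sup hp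
    _ ≤ #Q • P.sup v := nsmul_le_nsmul_left zero_le hcard
    _ ≤ ∑ q ∈ Q, v q := card_nsmul_le_sum _ _ _ fun q hq => Finset.sup_le fun p hp => hle p hp q hq

theorem Fin.sum_filter_le_val_le_sum_compl {n : ℕ} {v : Fin n → M} (hv : Antitone v) {t : ℕ}
    {Z : Finset (Fin n)} (hZ : #Z ≤ t) :
    ∑ j with t ≤ j.val, v j ≤ ∑ j ∈ Zᶜ, v j := by
  -- The points of `Z` at or above `t` are outnumbered by the points outside `Z` below `t`,
  -- each of which weighs at least as much.
  rcases lt_or_ge n t with hnt | htn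
  · rw [sum_eq_zero fun j hj => absurd (mem_filter.1 hj).2 (by omega)]
    positivity
  rw [← card_filter_add_card_filter_not (t ≤ ·.val)] at hZ
  have hlow : #{j ∈ Z | ¬t ≤ j.val} + #{j ∈ Zᶜ | ¬t ≤ j.val} = t := by
    rw [← card_union_of_disjoint (disjoint_filter_filter disjoint_compl_right), ← filter_union,
      union_compl]
    simpa [htn] using Fin.card_filter_val_lt (n := n) (m := t)
  rw [← sum_filter_add_sum_filter_not _ (· ∈ Z), ← sum_filter_add_sum_filter_not Zᶜ (t ≤ ·.val),
    add_comm, filter_filter, filter_filter]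
  gcongr ?_ + ?_
  · exact (sum_congr (by ext; simp [and_comm]) fun _ _ => rfl).le
  · refine sum_le_sum_of_card_le_of_forall_le ?_ fun p hp q hq => hv ?_
    · calc _ = #{j ∈ Z | t ≤ j.val} := by congr 1; ext; simp [and_comm]
        _ ≤ _ := by omega
    · simp only [mem_filter] at hp hq
      exact Fin.le_def.2 (by omega)

open scoped Classical
variable {R : Type*} [CommRing R] [IsDomain R] {n : ℕ} {u : Fin n → R}

theorem Polynomial.card_filter_eval_eq_zero_le (hu : Function.Injective u) {g : R[X]}
    (hg : g ≠ 0) : #{j | g.eval (u j) = 0} ≤ g.natDegree := by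
  rw [← card_image_of_injective _ hu]
  refine card_le_degree_of_subset_roots fun a ha => ?_
  obtain ⟨j, hj, rfl⟩ := mem_image.1 (Finset.mem_val ▸ ha)
  exact (mem_roots hg).2 (mem_filter.1 hj).2

theorem Polynomial.sum_filter_le_val_le_sum_filter_eval_ne_zero (hu : Function.Injective u)
    {v : Fin n → M} (hv : Antitone v) {g : R[X]} (hg : g ≠ 0) {t : ℕ} (ht : g.natDegree ≤ t) :
    ∑ j with t ≤ j.val, v j ≤ ∑ j with g.eval (u j) ≠ 0, v j := by
  rw [filter_not, ← compl_eq_univ_sdiff]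
  exact Fin.sum_filter_le_val_le_sum_compl hv ((card_filter_eval_eq_zero_le hu hg).trans ht)

theorem MvPolynomial.exists_sum_le_sum_filter_eval_ne_zero (hu : Function.Injective u) {m : ℕ}
    {w : (Fin m → Fin n) → M} (hw : Antitone w) {f : MvPolynomial (Fin m) R} (hf : f ≠ 0) :
    ∃ e : Fin m → ℕ, ∑ i, e i ≤ f.totalDegree ∧
      ∑ x with e ≤ Fin.val ∘ x, w x ≤ ∑ x with eval (u ∘ x) f ≠ 0, w x := by
  induction m with
  | zero =>
    refine ⟨0, by simp, sum_le_sum_of_subset fun x _ => ?_⟩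
    obtain ⟨a, rfl⟩ := C_surjective (Fin 0) f
    exact mem_filter.2 ⟨mem_univ _, by simpa using hf⟩
  | succ m ih =>
    set p := finSuccEquiv R m f
    have hp : p ≠ 0 := (map_ne_zero_iff _ (finSuccEquiv R m).injective).2 hf
    set t := p.natDegree
    have hw' : Antitone fun x : Fin m → Fin n => ∑ j with t ≤ j.val, w (Fin.cons j x) :=
      fun x y hxy => sum_le_sum fun j _ => hw (Fin.cons_le_cons.2 ⟨le_rfl, hxy⟩)
    obtain ⟨e, he, hle⟩ := ih hw' (leadingCoeff_ne_zero.2 hp)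
    refine ⟨Fin.cons t e, ?_, ?_⟩
    · rw [Fin.sum_cons, add_comm]
      exact (Nat.add_le_add_right he t).trans
        (totalDegree_coeff_finSuccEquiv_add_le f t (leadingCoeff_ne_zero.2 hp))
    calc ∑ x with Fin.cons t e ≤ Fin.val ∘ x, w x
        = ∑ x with e ≤ Fin.val ∘ x, ∑ j with t ≤ j.val, w (Fin.cons j x) := by
          rw [sum_filter, Fintype.sum_fin_succ_pi, sum_filter]
          refine sum_congr rfl fun x _ => ?_
          simp only [Fin.comp_cons, Fin.cons_le_cons]
          by_cases hx : e ≤ Fin.val ∘ x <;> simp [hx, sum_filter]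
      _ ≤ ∑ x with eval (u ∘ x) p.leadingCoeff ≠ 0, ∑ j with t ≤ j.val, w (Fin.cons j x) := hle
      _ ≤ ∑ x, ∑ j with eval (u ∘ Fin.cons j x) f ≠ 0, w (Fin.cons j x) := by
          rw [sum_filter]
          gcongr with x
          split_ifs with hx
          · set g := p.map (eval (u ∘ x))
            have hgt : g.coeff t ≠ 0 := (Polynomial.coeff_map _ _).trans_ne hx
            have heval (j : Fin n) : eval (u ∘ Fin.cons j x) f = g.eval (u j) := by
              rw [Fin.comp_cons, eval_eq_eval_mv_eval']
            simp_rw [heval]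
            exact sum_filter_le_val_le_sum_filter_eval_ne_zero hu
              (fun i j hij => hw (Fin.cons_le_cons.2 ⟨hij, le_rfl⟩))
              (fun h0 => hgt (by rw [h0, Polynomial.coeff_zero])) natDegree_map_le
          · exact zero_le
      _ = ∑ x with eval (u ∘ x) f ≠ 0, w x := by
          rw [sum_filter, Fintype.sum_fin_succ_pi]
          simp only [sum_filter]

end

theorem Set.ncard_sep_eq_sum_indicator {α : Type*} [Fintype α] (S : Set α) (P : α → Prop)
    [DecidablePred P] : ({x ∈ S | P x}.ncard : ℕ) = ∑ x with P x, S.indicator (fun _ => 1) x := by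
  classical
  rw [sum_indicator_eq_sum_filter, sum_const, smul_eq_mul, mul_one, filter_filter,
    ← Set.ncard_coe_finset]
  congr
  ext x
  simp [and_comm]

theorem IsLowerSet.antitone_indicator {α M : Type*} [Preorder α] [Zero M] [Preorder M]
    {S : Set α} (hS : IsLowerSet S) {c : M} (hc : 0 ≤ c) : Antitone (S.indicator fun _ => c) := by
  intro x y hxy
  by_cases hy : y ∈ S
  · simp [hy, hS hxy hy]
  · simpa [hy] using Set.indicator_nonneg (fun _ _ => hc) x

theorem Set.ncard_sep_add_ncard_sep_not {α : Type*} (S : Set α) (hS : S.Finite) (P : α → Prop) :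
    {x ∈ S | P x}.ncard + {x ∈ S | ¬P x}.ncard = S.ncard :=
  Set.ncard_inter_add_ncard_sdiff_eq_ncard S {x | P x} hS

theorem mul_ncard_le_ncard_sep_of_sum_le {ι : Type*} [Fintype ι] {n d : ℕ}
    {S : Set (ι → Fin n)} {δ : ℝ} (hδ1 : δ ≤ 1)
    (hrob : ∀ dv : ι → ℕ, (∑ i, dv i) = d →
      δ * S.ncard ≤ ({x ∈ S | ∀ i, dv i ≤ (x i : ℕ)}.ncard : ℝ))
    {e : ι → ℕ} (he : ∑ i, e i ≤ d) :
    δ * S.ncard ≤ ({x ∈ S | ∀ i, e i ≤ (x i : ℕ)}.ncard : ℝ) := by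
  classical
  rcases isEmpty_or_nonempty ι with _ | ⟨⟨i₀⟩⟩
  · simpa using mul_le_of_le_one_left (Nat.cast_nonneg _) hδ1
  set e' := e + Pi.single i₀ (d - ∑ i, e i)
  have he' : ∑ i, e' i = d := by
    simp only [e', Pi.add_apply, sum_add_distrib, Finset.sum_pi_single', mem_univ, if_true]
    omega
  refine (hrob e' he').trans ?_
  have hsub : {x ∈ S | ∀ i, e' i ≤ (x i : ℕ)} ⊆ {x ∈ S | ∀ i, e i ≤ (x i : ℕ)} :=
    fun x ⟨hx, hle⟩ => ⟨hx, fun i => le_trans (by simp [e']) (hle i)⟩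
  exact_mod_cast Set.ncard_le_ncard hsub

theorem stmt_8_general {F : Type*} [Field F] (m d n : ℕ)
    (u : Fin n → F) (hu : Function.Injective u)
    (S : Set (Fin m → Fin n))
    (hdc : ∀ y ∈ S, ∀ x : Fin m → Fin n, (∀ i, x i ≤ y i) → x ∈ S)
    (δ : ℝ) (hδ1 : δ ≤ 1)
    (hrob : ∀ dv : Fin m → ℕ, (∑ i, dv i) = d →
      δ * S.ncard ≤ ({x ∈ S | ∀ i, dv i ≤ (x i : ℕ)}.ncard : ℝ))
    (f : MvPolynomial (Fin m) F) (hf : f ≠ 0) (hfd : f.totalDegree ≤ d) :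
    (({x ∈ S | MvPolynomial.eval (fun i => u (x i)) f = 0}.ncard : ℝ) ≤ (1 - δ) * S.ncard) ∧
    (δ * S.ncard ≤ ({x ∈ S | MvPolynomial.eval (fun i => u (x i)) f ≠ 0}.ncard : ℝ)) := by
  have hS : IsLowerSet S := fun y x hxy hy => hdc y hy x hxy
  obtain ⟨e, he, hle⟩ := MvPolynomial.exists_sum_le_sum_filter_eval_ne_zero hu
    (hS.antitone_indicator (zero_le_one (α := ℕ))) hf
  rw [← S.ncard_sep_eq_sum_indicator, ← S.ncard_sep_eq_sum_indicator] at hle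
  have hnonzero : δ * S.ncard ≤ ({x ∈ S | MvPolynomial.eval (fun i => u (x i)) f ≠ 0}.ncard : ℝ) :=
    (mul_ncard_le_ncard_sep_of_sum_le hδ1 hrob (he.trans hfd)).trans (by exact_mod_cast hle)
  have hsplit := S.ncard_sep_add_ncard_sep_not S.toFinite
    fun x => MvPolynomial.eval (fun i => u (x i)) f = 0
  refine ⟨?_, hnonzero⟩
  rw [← hsplit] at hnonzero ⊢
  push_cast at hnonzero ⊢
  linarith

/-- Generalized Schwartz–Zippel for downward closed sets: if the
`d`-robustness of a nonempty downward closed set `S ⊆ {0,…,n-1}^m` is at least `δ·|S|`,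
then every nonzero polynomial of total degree at most `d` has at most `(1-δ)·|S|` zeroes
among the embedded points of `S`, equivalently at least `δ·|S|` non-zeroes. -/
theorem stmt_8 {F : Type*} [Field F] (m d n : ℕ)
    (u : Fin n → F) (hu : Function.Injective u)
    (S : Set (Fin m → Fin n)) (hne : S.Nonempty)
    (hdc : ∀ y ∈ S, ∀ x : Fin m → Fin n, (∀ i, x i ≤ y i) → x ∈ S)
    (δ : ℝ) (hδ0 : 0 ≤ δ) (hδ1 : δ ≤ 1)
    (hrob : ∀ dv : Fin m → ℕ, (∑ i, dv i) = d →
      δ * S.ncard ≤ ({x ∈ S | ∀ i, dv i ≤ (x i : ℕ)}.ncard : ℝ))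
    (f : MvPolynomial (Fin m) F) (hf : f ≠ 0) (hfd : f.totalDegree ≤ d) :
    (({x ∈ S | MvPolynomial.eval (fun i => u (x i)) f = 0}.ncard : ℝ) ≤ (1 - δ) * S.ncard) ∧
    (δ * S.ncard ≤ ({x ∈ S | MvPolynomial.eval (fun i => u (x i)) f ≠ 0}.ncard : ℝ)) :=
  stmt_8_general m d n u hu S hdc δ hδ1 hrob f hf hfd
end

section
/- Let ℓ be an even natural number and d ≤ ℓ a natural number. Let Step(ℓ) = {(x,y) ∈ ℕ² : x < ℓ, y < ℓ, and (x < ℓ/2 or y < ℓ/2)}, a downward closed set of size (3/4)ℓ². Then the d-robustness of Step(ℓ) satisfies Π_d(Step(ℓ)) ≥ ℓ(ℓ−d)/2; that is, for every (d₁,d₂) ∈ ℕ² with d₁ + d₂ = d, the number of points (x,y) ∈ Step(ℓ) with x ≥ d₁ and y ≥ d₂ is at least ℓ(ℓ−d)/2. -/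
/-- The step set `Step(ℓ)` (for even `ℓ`) has size `(3/4)ℓ²` and its
`d`-robustness is at least `ℓ(ℓ-d)/2` for every `d ≤ ℓ`. -/
theorem stmt_9 (ℓ d : ℕ) (hℓ : Even ℓ) (hd : d ≤ ℓ)
    (Step : Set (ℕ × ℕ))
    (hStep : Step = {p | p.1 < ℓ ∧ p.2 < ℓ ∧ (p.1 < ℓ / 2 ∨ p.2 < ℓ / 2)}) :
    Step.ncard = 3 * ℓ ^ 2 / 4 ∧
    ∀ d1 d2 : ℕ, d1 + d2 = d →
      ℓ * (ℓ - d) / 2 ≤ {p ∈ Step | d1 ≤ p.1 ∧ d2 ≤ p.2}.ncard := by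
  obtain ⟨k, hk⟩ := hℓ
  have hhalf : ℓ / 2 = k := by omega
  constructor
  · -- cardinality computation
    have hset : Step = ↑((Finset.range ℓ ×ˢ Finset.range ℓ).filter
        (fun p => p.1 < k ∨ p.2 < k)) := by
      rw [hStep]
      ext ⟨x, y⟩
      simp [Finset.mem_filter, hhalf]
      tauto
    rw [hset, Set.ncard_coe_finset]
    have hneg : ((Finset.range ℓ ×ˢ Finset.range ℓ).filter
        (fun p => ¬(p.1 < k ∨ p.2 < k))) = Finset.Ico k ℓ ×ˢ Finset.Ico k ℓ := by
      ext ⟨x, y⟩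
      simp [Finset.mem_filter]
      omega
    have hsum := Finset.card_filter_add_card_filter_not
      (s := Finset.range ℓ ×ˢ Finset.range ℓ) (p := fun p => p.1 < k ∨ p.2 < k)
    rw [hneg] at hsum
    simp [Finset.card_product, Nat.card_Ico] at hsum
    have hL : ℓ * ℓ = 4 * (k * k) := by subst hk; ring
    have hL2 : 3 * ℓ ^ 2 = 12 * (k * k) := by subst hk; ring
    have hkk : (ℓ - k) * (ℓ - k) = k * k := by
      have : ℓ - k = k := by omega
      rw [this]
    rw [hkk] at hsum
    omega
  · intro d1 d2 hd12
    -- the intersection set as a finset: union of two disjoint rectangles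
    set A := Finset.Ico d1 k ×ˢ Finset.Ico d2 ℓ with hA
    set B := Finset.Ico (max d1 k) ℓ ×ˢ Finset.Ico d2 k with hB
    have hset : {p ∈ Step | d1 ≤ p.1 ∧ d2 ≤ p.2} = ↑(A ∪ B) := by
      rw [hStep]
      ext ⟨x, y⟩
      simp [hA, hB, hhalf, Finset.mem_union]
      omega
    rw [hset, Set.ncard_coe_finset]
    have hdisj : Disjoint A B := by
      rw [Finset.disjoint_left]
      rintro ⟨x, y⟩ hxA hxB
      simp [hA, hB] at hxA hxB
      omega
    rw [Finset.card_union_of_disjoint hdisj]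
    simp [hA, hB, Finset.card_product, Nat.card_Ico]
    have hhalf2 : ℓ * (ℓ - d) / 2 = k * (ℓ - d) := by
      have : ℓ * (ℓ - d) = 2 * (k * (ℓ - d)) := by
        subst hk; ring
      omega
    rw [hhalf2]
    rcases le_or_gt d1 k with h1 | h1 <;> rcases le_or_gt d2 k with h2 | h2
    · -- d1 ≤ k, d2 ≤ k
      have hmax : max d1 k = k := by omega
      rw [hmax]
      have hd2ℓ : d2 ≤ ℓ := by omega
      have hkℓ : k ≤ ℓ := by omega
      zify [h1, h2, hd, hd2ℓ, hkℓ]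
      nlinarith [mul_nonneg (by omega : (0:ℤ) ≤ (k:ℤ) - d1) (by omega : (0:ℤ) ≤ (k:ℤ) - d2)]
    · -- d1 ≤ k < d2
      have hmax : max d1 k = k := by omega
      have hz : k - d2 = 0 := by omega
      rw [hmax, hz, Nat.mul_zero, Nat.add_zero]
      have hd2ℓ : d2 ≤ ℓ := by omega
      zify [h1, hd, hd2ℓ]
      nlinarith [mul_nonneg (by omega : (0:ℤ) ≤ (d1:ℤ)) (by omega : (0:ℤ) ≤ (d2:ℤ) - k)]
    · -- d2 ≤ k < d1
      have hmax : max d1 k = d1 := by omega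
      have hz : k - d1 = 0 := by omega
      rw [hmax, hz, Nat.zero_mul, Nat.zero_add]
      have hd1ℓ : d1 ≤ ℓ := by omega
      zify [h2, hd, hd1ℓ]
      nlinarith [mul_nonneg (by omega : (0:ℤ) ≤ (d2:ℤ)) (by omega : (0:ℤ) ≤ (d1:ℤ) - k)]
    · -- impossible
      omega
end

section
/- Let m ≥ 2, and let m, d, t be natural numbers with t ≥ d + m. Let F be a field and H₁,…,H_t affine hyperplanes in F^m in general position, with 𝒮 the set of their m-wise intersection points. Let ℒ be the family of lines obtained by intersecting m−1 of the hyperplanes, and for each line ℓ ∈ ℒ fix an affine parameterization γ_ℓ : F → F^m of ℓ and a univariate polynomial g_ℓ ∈ F[Z] of degree at most d. Suppose that whenever two distinct lines ℓ₁, ℓ₂ ∈ ℒ have a common point p (necessarily p ∈ 𝒮), we have g_{ℓ₁}(γ_{ℓ₁}⁻¹(p)) = g_{ℓ₂}(γ_{ℓ₂}⁻¹(p)). Then there exists a polynomial f ∈ F[X₁,…,X_m] of total degree at most d such that f ∘ γ_ℓ = g_ℓ as univariate polynomials, for every line ℓ ∈ ℒ. -/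
/-- Local characterization via lines: degree-`d` univariate polynomials on the
lines obtained by intersecting `m-1` of `t ≥ d + m` hyperplanes in general position, which are
pairwise consistent at common points, are all restrictions of a single `m`-variate polynomial
of total degree at most `d`. -/
theorem stmt_12 {F : Type*} [Field F] (m d t : ℕ) (hm : 2 ≤ m) (ht : d + m ≤ t)
    (a : Fin t → Fin m → F) (b : Fin t → F) (ha : ∀ i, a i ≠ 0)
    (H : Fin t → Set (Fin m → F))
    (hH : ∀ i, H i = {x | ∑ j, a i j * x j = b i})
    (hgen1 : ∀ s : Finset (Fin t), s.card = m → ∃! x : Fin m → F, ∀ i ∈ s, x ∈ H i)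
    (hgen2 : ∀ s : Finset (Fin t), s.card = m + 1 → ¬ ∃ x : Fin m → F, ∀ i ∈ s, x ∈ H i)
    (lpt lv : Finset (Fin t) → Fin m → F)
    (γ : Finset (Fin t) → F → (Fin m → F))
    (hγ : ∀ s z, γ s z = fun k => lpt s k + z * lv s k)
    (hγinj : ∀ s : Finset (Fin t), s.card = m - 1 → Function.Injective (γ s))
    (hγrange : ∀ s : Finset (Fin t), s.card = m - 1 →
      Set.range (γ s) = {x | ∀ i ∈ s, x ∈ H i})
    (g : Finset (Fin t) → Polynomial F)
    (hgdeg : ∀ s : Finset (Fin t), s.card = m - 1 → (g s).natDegree ≤ d)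
    (hcons : ∀ s₁ s₂ : Finset (Fin t), s₁.card = m - 1 → s₂.card = m - 1 → s₁ ≠ s₂ →
      ∀ z w : F, γ s₁ z = γ s₂ w →
        Polynomial.eval z (g s₁) = Polynomial.eval w (g s₂)) :
    ∃ f : MvPolynomial (Fin m) F, f.totalDegree ≤ d ∧
      ∀ s : Finset (Fin t), s.card = m - 1 →
        MvPolynomial.aeval
          (fun k => (Polynomial.C (lpt s k) + Polynomial.C (lv s k) * Polynomial.X :
            Polynomial F)) f = g s := by
  classical
  -- the affine-linear forms defining the hyperplanes
  set L : Fin t → MvPolynomial (Fin m) F :=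
    fun i => (∑ j, MvPolynomial.C (a i j) * MvPolynomial.X j) - MvPolynomial.C (b i) with hL
  have hmem : ∀ (i : Fin t) (x : Fin m → F), x ∈ H i ↔ MvPolynomial.eval x (L i) = 0 := by
    intro i x
    rw [hH i]
    simp only [Set.mem_setOf_eq, hL, map_sub, map_sum, map_mul, MvPolynomial.eval_C,
      MvPolynomial.eval_X, sub_eq_zero]
  have hLdeg : ∀ i, (L i).totalDegree ≤ 1 := by
    intro i
    refine (MvPolynomial.totalDegree_sub _ _).trans (max_le ?_ (by simp))
    refine (MvPolynomial.totalDegree_finset_sum _ _).trans (Finset.sup_le ?_)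
    intro j _
    refine (MvPolynomial.totalDegree_mul _ _).trans ?_
    simp [MvPolynomial.totalDegree_X]
  -- choice of intersection points
  have hex : ∀ σ : Finset (Fin t), ∃ x : Fin m → F, σ.card = m →
      (∀ i ∈ σ, x ∈ H i) ∧ (∀ y, (∀ i ∈ σ, y ∈ H i) → y = x) := by
    intro σ
    by_cases h : σ.card = m
    · obtain ⟨x, hx, hy⟩ := hgen1 σ h
      exact ⟨x, fun _ => ⟨hx, hy⟩⟩
    · exact ⟨0, fun hc => absurd hc h⟩
  choose pt hpt using hex
  have hLne : ∀ (σ : Finset (Fin t)), σ.card = m → ∀ i ∉ σ,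
      MvPolynomial.eval (pt σ) (L i) ≠ 0 := by
    intro σ hσ i hi h0
    refine hgen2 (insert i σ) (by rw [Finset.card_insert_of_notMem hi, hσ]) ⟨pt σ, ?_⟩
    intro j hj
    rcases Finset.mem_insert.mp hj with rfl | hj
    · exact (hmem j _).mpr h0
    · exact (hpt σ hσ).1 j hj
  -- choice of preimages on lines
  have hzex : ∀ (s : Finset (Fin t)) (x : Fin m → F), ∃ z : F,
      s.card = m - 1 → (∀ i ∈ s, x ∈ H i) → γ s z = x := by
    intro s x
    by_cases h : s.card = m - 1 ∧ ∀ i ∈ s, x ∈ H i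
    · have : x ∈ Set.range (γ s) := by rw [hγrange s h.1]; exact h.2
      obtain ⟨z, hz⟩ := this
      exact ⟨z, fun _ _ => hz⟩
    · exact ⟨0, fun h1 h2 => absurd ⟨h1, h2⟩ h⟩
  choose zf hzf using hzex
  -- the well-defined value of the family `g` at an intersection point
  have hvex : ∀ σ : Finset (Fin t), ∃ v : F, σ.card = m →
      ∀ s z, s.card = m - 1 → s ⊆ σ → γ s z = pt σ → Polynomial.eval z (g s) = v := by
    intro σ
    by_cases hσ : σ.card = m
    · have hne : σ.Nonempty := Finset.card_pos.mp (by omega)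
      obtain ⟨j₀, hj₀⟩ := hne
      have hs₀card : (σ.erase j₀).card = m - 1 := by
        rw [Finset.card_erase_of_mem hj₀, hσ]
      have hs₀mem : ∀ i ∈ σ.erase j₀, pt σ ∈ H i :=
        fun i hi => (hpt σ hσ).1 i (Finset.mem_of_mem_erase hi)
      have hz₀ : γ (σ.erase j₀) (zf (σ.erase j₀) (pt σ)) = pt σ :=
        hzf _ _ hs₀card hs₀mem
      refine ⟨Polynomial.eval (zf (σ.erase j₀) (pt σ)) (g (σ.erase j₀)),
        fun _ s z hs hsub hz => ?_⟩
      by_cases he : s = σ.erase j₀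
      · subst he
        have hzz : z = zf (σ.erase j₀) (pt σ) := hγinj _ hs (hz.trans hz₀.symm)
        rw [hzz]
      · exact hcons s (σ.erase j₀) hs hs₀card he z _ (hz.trans hz₀.symm)
    · exact ⟨0, fun h => absurd h hσ⟩
  choose val hval using hvex
  -- the first d + m hyperplanes
  have hlt : ∀ x ∈ Finset.range (d + m), x < t :=
    fun x hx => lt_of_lt_of_le (Finset.mem_range.mp hx) ht
  set A : Finset (Fin t) := (Finset.range (d + m)).attachFin hlt with hA
  have hAcard : A.card = d + m := by
    rw [hA, Finset.card_attachFin, Finset.card_range]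
  -- the interpolating polynomial
  set denom : Finset (Fin t) → F :=
    fun σ => ∏ i ∈ A \ σ, MvPolynomial.eval (pt σ) (L i) with hdenomdef
  have hdenom : ∀ σ ∈ A.powersetCard m, denom σ ≠ 0 := by
    intro σ hσ
    obtain ⟨hσA, hσcard⟩ := Finset.mem_powersetCard.mp hσ
    rw [hdenomdef]
    refine Finset.prod_ne_zero_iff.mpr ?_
    intro i hi
    exact hLne σ hσcard i (Finset.mem_sdiff.mp hi).2
  set f : MvPolynomial (Fin m) F :=
    ∑ σ ∈ A.powersetCard m, MvPolynomial.C (val σ / denom σ) * ∏ i ∈ A \ σ, L i with hf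
  have hcardsdiff : ∀ σ ∈ A.powersetCard m, (A \ σ).card = d := by
    intro σ hσ
    obtain ⟨hσA, hσcard⟩ := Finset.mem_powersetCard.mp hσ
    rw [Finset.card_sdiff_of_subset hσA, hAcard, hσcard]
    omega
  have hfdeg : f.totalDegree ≤ d := by
    rw [hf]
    refine (MvPolynomial.totalDegree_finset_sum _ _).trans (Finset.sup_le ?_)
    intro σ hσ
    refine (MvPolynomial.totalDegree_mul _ _).trans ?_
    rw [MvPolynomial.totalDegree_C, zero_add]
    refine (MvPolynomial.totalDegree_finset_prod _ _).trans ?_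
    calc ∑ i ∈ A \ σ, (L i).totalDegree ≤ ∑ _i ∈ A \ σ, 1 :=
          Finset.sum_le_sum (fun i _ => hLdeg i)
      _ = (A \ σ).card := by simp
      _ = d := hcardsdiff σ hσ
  -- interpolation property
  have hinterp : ∀ τ ∈ A.powersetCard m, MvPolynomial.eval (pt τ) f = val τ := by
    intro τ hτ
    obtain ⟨hτA, hτcard⟩ := Finset.mem_powersetCard.mp hτ
    rw [hf, map_sum, Finset.sum_eq_single_of_mem τ hτ]
    · rw [map_mul, MvPolynomial.eval_C, map_prod]
      exact div_mul_cancel₀ _ (hdenom τ hτ)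
    · intro σ hσ hne
      obtain ⟨hσA, hσcard⟩ := Finset.mem_powersetCard.mp hσ
      have hsub : ¬ τ ⊆ σ := by
        intro hsub
        exact hne (Finset.eq_of_subset_of_card_le hsub (by rw [hσcard, hτcard])).symm
      obtain ⟨i, hiτ, hiσ⟩ := Finset.not_subset.mp hsub
      rw [map_mul, map_prod]
      refine mul_eq_zero_of_right _ ?_
      refine Finset.prod_eq_zero (Finset.mem_sdiff.mpr ⟨hτA hiτ, hiσ⟩) ?_
      exact (hmem i (pt τ)).mp ((hpt τ hτcard).1 i hiτ)
  -- compatibility of evaluation with substitution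
  have hcompat : ∀ (s : Finset (Fin t)) (z : F) (q : MvPolynomial (Fin m) F),
      Polynomial.eval z (MvPolynomial.aeval
        (fun k => (Polynomial.C (lpt s k) + Polynomial.C (lv s k) * Polynomial.X :
          Polynomial F)) q) = MvPolynomial.eval (γ s z) q := by
    intro s z q
    rw [MvPolynomial.aeval_def, MvPolynomial.polynomial_eval_eval₂, hγ]
    have h1 : ((Polynomial.evalRingHom z).comp (algebraMap F (Polynomial F))) =
        RingHom.id F := by
      ext r; simp
    have h2 : (fun k => Polynomial.eval z
        (Polynomial.C (lpt s k) + Polynomial.C (lv s k) * Polynomial.X)) =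
        fun k => lpt s k + z * lv s k := by
      funext k
      simp only [Polynomial.eval_add, Polynomial.eval_C, Polynomial.eval_mul, Polynomial.eval_X]
      ring
    rw [h1, h2, MvPolynomial.eval₂_id]
  have haedeg : ∀ s : Finset (Fin t),
      (MvPolynomial.aeval
        (fun k => (Polynomial.C (lpt s k) + Polynomial.C (lv s k) * Polynomial.X :
          Polynomial F)) f).natDegree ≤ d := by
    intro s
    have h1 : ∀ k : Fin m, ((Polynomial.C (lpt s k) + Polynomial.C (lv s k) * Polynomial.X :
        Polynomial F)).natDegree ≤ 1 := by
      intro k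
      refine (Polynomial.natDegree_add_le _ _).trans (max_le (by simp) ?_)
      exact (Polynomial.natDegree_C_mul_le _ _).trans Polynomial.natDegree_X_le
    have := MvPolynomial.aeval_natDegree_le f hfdeg _ h1
    simpa using this
  -- the key step: if f agrees with g s at the d+1 special points, then f restricts to g s
  have key : ∀ s : Finset (Fin t), s.card = m - 1 →
      (∀ i ∈ A \ s, MvPolynomial.eval (pt (insert i s)) f =
        Polynomial.eval (zf s (pt (insert i s))) (g s)) →
      MvPolynomial.aeval
        (fun k => (Polynomial.C (lpt s k) + Polynomial.C (lv s k) * Polynomial.X :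
          Polynomial F)) f = g s := by
    intro s hs hpts
    have hzfs : ∀ i ∈ A \ s, γ s (zf s (pt (insert i s))) = pt (insert i s) := by
      intro i hi
      obtain ⟨hiA, his⟩ := Finset.mem_sdiff.mp hi
      have hσcard : (insert i s).card = m := by
        rw [Finset.card_insert_of_notMem his, hs]; omega
      exact hzf s _ hs (fun j hj => (hpt _ hσcard).1 j (Finset.mem_insert_of_mem hj))
    have hIcard : d + 1 ≤ (A \ s).card := by
      have h1 : (A ∩ s).card ≤ s.card := Finset.card_le_card Finset.inter_subset_right
      have h2 : (A \ s).card + (A ∩ s).card = A.card := Finset.card_sdiff_add_card_inter A s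
      rw [hAcard] at h2
      rw [hs] at h1
      omega
    have hq : (MvPolynomial.aeval
        (fun k => (Polynomial.C (lpt s k) + Polynomial.C (lv s k) * Polynomial.X :
          Polynomial F)) f - g s) = 0 := by
      refine Polynomial.eq_zero_of_natDegree_lt_card_of_eval_eq_zero _
        (f := fun i : {x // x ∈ A \ s} => zf s (pt (insert i.1 s))) ?_ ?_ ?_
      · intro i i' hii
        by_contra hne
        have hne' : i.1 ≠ i'.1 := fun h => hne (Subtype.ext h)
        have hpe : pt (insert i.1 s) = pt (insert i'.1 s) := by
          have hii' : zf s (pt (insert i.1 s)) = zf s (pt (insert i'.1 s)) := hii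
          rw [← hzfs i.1 i.2, ← hzfs i'.1 i'.2, hii']
        obtain ⟨hiA, his⟩ := Finset.mem_sdiff.mp i.2
        obtain ⟨hi'A, hi's⟩ := Finset.mem_sdiff.mp i'.2
        have hσ'card : (insert i'.1 s).card = m := by
          rw [Finset.card_insert_of_notMem hi's, hs]; omega
        have hcard2 : (insert i.1 (insert i'.1 s)).card = m + 1 := by
          rw [Finset.card_insert_of_notMem, hσ'card]
          intro hmem'
          rcases Finset.mem_insert.mp hmem' with h | h
          · exact hne' h
          · exact his h
        refine hgen2 _ hcard2 ⟨pt (insert i.1 s), ?_⟩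
        intro j hj
        have hσcard : (insert i.1 s).card = m := by
          rw [Finset.card_insert_of_notMem his, hs]; omega
        rcases Finset.mem_insert.mp hj with rfl | hj
        · exact (hpt _ hσcard).1 _ (Finset.mem_insert_self _ _)
        · rw [hpe]
          exact (hpt _ hσ'card).1 j hj
      · intro i
        rw [Polynomial.eval_sub, hcompat, hzfs i.1 i.2, hpts i.1 i.2, sub_self]
      · refine lt_of_le_of_lt ((Polynomial.natDegree_sub_le _ _).trans
          (max_le (haedeg s) (hgdeg s hs))) ?_
        rw [Fintype.card_coe]
        omega
    exact sub_eq_zero.mp hq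
  -- main induction on the number of indices outside A
  have main : ∀ n (s : Finset (Fin t)), (s \ A).card = n → s.card = m - 1 →
      MvPolynomial.aeval
        (fun k => (Polynomial.C (lpt s k) + Polynomial.C (lv s k) * Polynomial.X :
          Polynomial F)) f = g s := by
    intro n
    induction n with
    | zero =>
      intro s h0 hs
      have hsA : s ⊆ A := by
        rw [← Finset.sdiff_eq_empty_iff_subset]
        exact Finset.card_eq_zero.mp h0
      refine key s hs ?_
      intro i hi
      obtain ⟨hiA, his⟩ := Finset.mem_sdiff.mp hi
      have hσcard : (insert i s).card = m := by
        rw [Finset.card_insert_of_notMem his, hs]; omega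
      have hσmem : insert i s ∈ A.powersetCard m :=
        Finset.mem_powersetCard.mpr ⟨Finset.insert_subset hiA hsA, hσcard⟩
      rw [hinterp _ hσmem]
      exact (hval _ hσcard s (zf s (pt (insert i s))) hs (Finset.subset_insert i s)
        (hzf s _ hs (fun j hj => (hpt _ hσcard).1 j (Finset.mem_insert_of_mem hj)))).symm
    | succ n ih =>
      intro s h1 hs
      obtain ⟨j, hj⟩ : (s \ A).Nonempty := Finset.card_pos.mp (by omega)
      obtain ⟨hjs, hjA⟩ := Finset.mem_sdiff.mp hj
      refine key s hs ?_
      intro i hi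
      obtain ⟨hiA, his⟩ := Finset.mem_sdiff.mp hi
      have hσcard : (insert i s).card = m := by
        rw [Finset.card_insert_of_notMem his, hs]; omega
      have hσprop : ∀ jj ∈ insert i s, pt (insert i s) ∈ H jj := (hpt _ hσcard).1
      have hij : i ≠ j := fun h => hjA (h ▸ hiA)
      have his' : i ∉ s.erase j := fun h => his (Finset.mem_of_mem_erase h)
      have hs'card : (insert i (s.erase j)).card = m - 1 := by
        rw [Finset.card_insert_of_notMem his', Finset.card_erase_of_mem hjs, hs]; omega
      have hs'sub : insert i (s.erase j) ⊆ insert i s :=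
        Finset.insert_subset_insert _ (Finset.erase_subset _ _)
      have hw : γ (insert i (s.erase j)) (zf (insert i (s.erase j)) (pt (insert i s))) =
          pt (insert i s) :=
        hzf _ _ hs'card (fun jj hjj => hσprop jj (hs'sub hjj))
      have hdiffA : insert i (s.erase j) \ A = (s \ A).erase j := by
        ext x
        simp only [Finset.mem_sdiff, Finset.mem_insert, Finset.mem_erase]
        constructor
        · rintro ⟨rfl | ⟨hxj, hxs⟩, hxA⟩
          · exact absurd hiA hxA
          · exact ⟨hxj, hxs, hxA⟩
        · rintro ⟨hxj, hxs, hxA⟩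
          exact ⟨Or.inr ⟨hxj, hxs⟩, hxA⟩
      have hdiff : (insert i (s.erase j) \ A).card = n := by
        rw [hdiffA, Finset.card_erase_of_mem hj, h1]
        omega
      have hIH := ih (insert i (s.erase j)) hdiff hs'card
      have e1 : MvPolynomial.eval (pt (insert i s)) f =
          Polynomial.eval (zf (insert i (s.erase j)) (pt (insert i s)))
            (g (insert i (s.erase j))) := by
        have h3 := hcompat (insert i (s.erase j)) (zf (insert i (s.erase j)) (pt (insert i s))) f
        rw [hw] at h3
        rw [← h3, hIH]
      rw [e1]
      have hz : γ s (zf s (pt (insert i s))) = pt (insert i s) :=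
        hzf s _ hs (fun jj hjj => hσprop jj (Finset.mem_insert_of_mem hjj))
      have hne : insert i (s.erase j) ≠ s := by
        intro h
        rw [← h] at hjs
        rcases Finset.mem_insert.mp hjs with h' | h'
        · exact hij h'.symm
        · exact Finset.notMem_erase j s h'
      exact hcons _ s hs'card hs hne _ _ (hw.trans hz.symm)
  exact ⟨f, hfdeg, fun s hs => main (s \ A).card s rfl hs⟩
end

section
/- Let d ≥ 1 be a natural number, let δ > 1/2, and let S ⊆ ℕ² be a finite nonempty downward closed set whose d-robustness satisfies Π_d(S) ≥ δ·|S|. Then |S| ≥ (√(δ·|S| + d²/4) + d/2)². Consequently, setting R = d²/(2|S|), one has R ≤ (1−δ)²/2. -/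
set_option maxHeartbeats 2000000 in
/-- a finite nonempty downward closed `S ⊆ ℕ²` with `d`-robustness at least
`δ·|S|` for some `δ > 1/2` satisfies `|S| ≥ (√(δ|S| + d²/4) + d/2)²`; consequently
`R = d²/(2|S|)` satisfies `R ≤ (1-δ)²/2`. -/
theorem stmt_18 (d : ℕ) (hd : 1 ≤ d) (δ : ℝ) (hδ : 1 / 2 < δ)
    (S : Set (ℕ × ℕ)) (hfin : S.Finite) (hne : S.Nonempty)
    (hdc : ∀ y ∈ S, ∀ x : ℕ × ℕ, x.1 ≤ y.1 → x.2 ≤ y.2 → x ∈ S)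
    (hrob : ∀ d1 d2 : ℕ, d1 + d2 = d →
      δ * S.ncard ≤ ({p ∈ S | d1 ≤ p.1 ∧ d2 ≤ p.2}.ncard : ℝ)) :
    ((Real.sqrt (δ * S.ncard + (d : ℝ) ^ 2 / 4) + (d : ℝ) / 2) ^ 2 ≤ (S.ncard : ℝ)) ∧
    ((d : ℝ) ^ 2 / (2 * S.ncard) ≤ (1 - δ) ^ 2 / 2) := by
  classical
  obtain ⟨F, hF⟩ : ∃ F : Finset (ℕ × ℕ), ↑F = S := ⟨hfin.toFinset, hfin.coe_toFinset⟩
  subst hF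
  rw [Set.ncard_coe_finset] at *
  have hFne : F.Nonempty := Finset.coe_nonempty.mp hne
  set N : ℕ := F.card with hN
  have hN1 : 1 ≤ N := Finset.card_pos.mpr hFne
  -- robustness in Finset form
  have key : ∀ d1 d2 : ℕ, d1 + d2 = d →
      δ * N ≤ ((F.filter fun p => d1 ≤ p.1 ∧ d2 ≤ p.2).card : ℝ) := by
    intro d1 d2 h
    have h2 := hrob d1 d2 h
    have : {p ∈ (↑F : Set (ℕ × ℕ)) | d1 ≤ p.1 ∧ d2 ≤ p.2}
        = ↑(F.filter fun p => d1 ≤ p.1 ∧ d2 ≤ p.2) := by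
      ext p; simp
    rwa [this, Set.ncard_coe_finset] at h2
  -- witness point with both coordinates ≥ d
  obtain ⟨q, hqF, hqx, hqy⟩ : ∃ q ∈ F, d ≤ q.1 ∧ d ≤ q.2 := by
    have h1 := key d 0 (by omega)
    have h2 := key 0 d (by omega)
    set A0 := F.filter fun p => d ≤ p.1 ∧ 0 ≤ p.2 with hA0
    set B0 := F.filter fun p => 0 ≤ p.1 ∧ d ≤ p.2 with hB0
    have hcup : (A0 ∪ B0).card ≤ N := Finset.card_le_card (by
      intro p hp
      rcases Finset.mem_union.mp hp with h | h
      · exact (Finset.mem_filter.mp h).1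
      · exact (Finset.mem_filter.mp h).1)
    have hie : A0.card + B0.card = (A0 ∪ B0).card + (A0 ∩ B0).card :=
      (Finset.card_union_add_card_inter A0 B0).symm
    have hpos : 0 < (A0 ∩ B0).card := by
      by_contra hc
      push_neg at hc
      interval_cases h : (A0 ∩ B0).card
      · have hcards : (A0.card : ℝ) + B0.card ≤ N := by
          have : A0.card + B0.card ≤ N := by omega
          exact_mod_cast this
        have hNpos : (0:ℝ) < N := by exact_mod_cast hN1
        nlinarith
    obtain ⟨q, hq⟩ := Finset.card_pos.mp hpos
    have hqa := Finset.mem_filter.mp (Finset.mem_inter.mp hq).1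
    have hqb := Finset.mem_filter.mp (Finset.mem_inter.mp hq).2
    exact ⟨q, hqa.1, hqa.2.1, hqb.2.2⟩
  have hbox : ∀ x y : ℕ, x ≤ q.1 → y ≤ q.2 → (x, y) ∈ F := by
    intro x y hx hy
    exact hdc q hqF (x, y) hx hy
  -- quadrants
  set Q00 := F.filter (fun p => p.1 < d ∧ p.2 < d) with hQ00
  set Q10 := F.filter (fun p => d ≤ p.1 ∧ p.2 < d) with hQ10
  set Q01 := F.filter (fun p => p.1 < d ∧ d ≤ p.2) with hQ01
  set Q11 := F.filter (fun p => d ≤ p.1 ∧ d ≤ p.2) with hQ11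
  have hsplit : N = Q00.card + Q10.card + Q01.card + Q11.card := by
    have e1 : Q00 ∪ Q10 = F.filter fun p => p.2 < d := by
      ext p
      simp only [hQ00, hQ10, Finset.mem_union, Finset.mem_filter]
      constructor
      · rintro (⟨h1, h2⟩ | ⟨h1, h2⟩) <;> exact ⟨h1, h2.2⟩
      · rintro ⟨h1, h2⟩
        rcases lt_or_ge p.1 d with h | h
        · exact Or.inl ⟨h1, h, h2⟩
        · exact Or.inr ⟨h1, h, h2⟩
    have e2 : Q01 ∪ Q11 = F.filter fun p => d ≤ p.2 := by
      ext p
      simp only [hQ01, hQ11, Finset.mem_union, Finset.mem_filter]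
      constructor
      · rintro (⟨h1, h2⟩ | ⟨h1, h2⟩) <;> exact ⟨h1, h2.2⟩
      · rintro ⟨h1, h2⟩
        rcases lt_or_ge p.1 d with h | h
        · exact Or.inl ⟨h1, h, h2⟩
        · exact Or.inr ⟨h1, h, h2⟩
    have d1 : Disjoint Q00 Q10 := by
      rw [Finset.disjoint_left]
      intro p hp hp'
      have := (Finset.mem_filter.mp hp).2
      have := (Finset.mem_filter.mp hp').2
      omega
    have d2 : Disjoint Q01 Q11 := by
      rw [Finset.disjoint_left]
      intro p hp hp'
      have := (Finset.mem_filter.mp hp).2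
      have := (Finset.mem_filter.mp hp').2
      omega
    have c1 : (F.filter fun p => p.2 < d).card = Q00.card + Q10.card := by
      rw [← e1, Finset.card_union_of_disjoint d1]
    have c2 : (F.filter fun p => d ≤ p.2).card = Q01.card + Q11.card := by
      rw [← e2, Finset.card_union_of_disjoint d2]
    have c3 : (F.filter fun p => p.2 < d).card + (F.filter fun p => d ≤ p.2).card = N := by
      have h := Finset.card_filter_add_card_filter_not
        (s := F) (p := fun p : ℕ × ℕ => p.2 < d)
      simpa only [not_lt] using h
    omega
  have hQ00card : Q00.card = d * d := by
    have : Q00 = Finset.range d ×ˢ Finset.range d := by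
      ext p
      simp only [hQ00, Finset.mem_filter, Finset.mem_product, Finset.mem_range]
      constructor
      · rintro ⟨_, h1, h2⟩; exact ⟨h1, h2⟩
      · rintro ⟨h1, h2⟩
        refine ⟨?_, h1, h2⟩
        have : (p.1, p.2) ∈ F := hbox p.1 p.2 (by omega) (by omega)
        simpa using this
    rw [this, Finset.card_product, Finset.card_range]
  -- boundary sets
  set FA := F.filter (fun p => d ≤ p.1 ∧ p.2 = d) with hFA
  set FB := F.filter (fun p => p.1 = d ∧ d ≤ p.2) with hFB
  have hw : Q11.card ≤ FA.card * FB.card := by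
    rw [← Finset.card_product]
    apply Finset.card_le_card_of_injOn (fun p => ((p.1, d), (d, p.2)))
    · intro p hp
      obtain ⟨hpF, hp1, hp2⟩ := Finset.mem_filter.mp hp
      refine Finset.mem_product.mpr ⟨?_, ?_⟩
      · exact Finset.mem_filter.mpr ⟨hdc p hpF (p.1, d) le_rfl hp2, hp1, rfl⟩
      · exact Finset.mem_filter.mpr ⟨hdc p hpF (d, p.2) hp1 le_rfl, rfl, hp2⟩
    · intro p _ r _ h
      simp only [Prod.mk.injEq] at h
      exact Prod.ext h.1.1 h.2.2
  have hu : FA.card * d ≤ Q10.card := by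
    rw [← Finset.card_range d, ← Finset.card_product]
    apply Finset.card_le_card_of_injOn (fun q => (q.1.1, q.2))
    · intro p hp
      obtain ⟨hp1, hp2⟩ := Finset.mem_product.mp hp
      obtain ⟨hpF, hpx, hpy⟩ := Finset.mem_filter.mp hp1
      have hy : p.2 < d := Finset.mem_range.mp hp2
      refine Finset.mem_filter.mpr ⟨?_, hpx, hy⟩
      exact hdc p.1 hpF (p.1.1, p.2) le_rfl (by omega)
    · intro p hp r hr h
      obtain ⟨hp1, _⟩ := Finset.mem_product.mp hp
      obtain ⟨hr1, _⟩ := Finset.mem_product.mp hr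
      have hpd := (Finset.mem_filter.mp hp1).2.2
      have hrd := (Finset.mem_filter.mp hr1).2.2
      simp only [Prod.mk.injEq] at h
      exact Prod.ext (Prod.ext h.1 (hpd.trans hrd.symm)) h.2
  have hv : FB.card * d ≤ Q01.card := by
    rw [← Finset.card_range d, ← Finset.card_product]
    apply Finset.card_le_card_of_injOn (fun q => (q.2, q.1.2))
    · intro p hp
      obtain ⟨hp1, hp2⟩ := Finset.mem_product.mp hp
      obtain ⟨hpF, hpx, hpy⟩ := Finset.mem_filter.mp hp1
      have hy : p.2 < d := Finset.mem_range.mp hp2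
      refine Finset.mem_filter.mpr ⟨?_, hy, hpy⟩
      exact hdc p.1 hpF (p.2, p.1.2) (by omega) le_rfl
    · intro p hp r hr h
      obtain ⟨hp1, _⟩ := Finset.mem_product.mp hp
      obtain ⟨hr1, _⟩ := Finset.mem_product.mp hr
      have hpd := (Finset.mem_filter.mp hp1).2.1
      have hrd := (Finset.mem_filter.mp hr1).2.1
      simp only [Prod.mk.injEq] at h
      exact Prod.ext (Prod.ext (hpd.trans hrd.symm) h.2) h.1
  -- robustness bounds on the two half planes
  have hub : (d:ℝ) * d + Q10.card ≤ (1 - δ) * N := by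
    have h2 := key 0 d (by omega)
    have e2 : (F.filter fun p => (0:ℕ) ≤ p.1 ∧ d ≤ p.2).card = Q01.card + Q11.card := by
      have e0 : (F.filter fun p => (0:ℕ) ≤ p.1 ∧ d ≤ p.2) = Q01 ∪ Q11 := by
        ext p
        simp only [Finset.mem_filter, Finset.mem_union, hQ01, hQ11, Finset.mem_filter]
        constructor
        · rintro ⟨h1, _, h2⟩
          rcases lt_or_ge p.1 d with h | h
          · exact Or.inl ⟨h1, h, h2⟩
          · exact Or.inr ⟨h1, h, h2⟩
        · rintro (⟨h1, h2⟩ | ⟨h1, h2⟩) <;> exact ⟨h1, Nat.zero_le _, h2.2⟩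
      rw [e0]
      apply Finset.card_union_of_disjoint
      rw [Finset.disjoint_left]
      intro p hp hp'
      have := (Finset.mem_filter.mp hp).2
      have := (Finset.mem_filter.mp hp').2
      omega
    rw [e2] at h2
    push_cast at h2
    have hsplit' : (N:ℝ) = d * d + Q10.card + (Q01.card + Q11.card) := by
      rw [hsplit, hQ00card]; push_cast; ring
    linarith
  have hvb : (d:ℝ) * d + Q01.card ≤ (1 - δ) * N := by
    have h2 := key d 0 (by omega)
    have e2 : (F.filter fun p => d ≤ p.1 ∧ (0:ℕ) ≤ p.2).card = Q10.card + Q11.card := by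
      have e0 : (F.filter fun p => d ≤ p.1 ∧ (0:ℕ) ≤ p.2) = Q10 ∪ Q11 := by
        ext p
        simp only [Finset.mem_filter, Finset.mem_union, hQ10, hQ11, Finset.mem_filter]
        constructor
        · rintro ⟨h1, h2, _⟩
          rcases lt_or_ge p.2 d with h | h
          · exact Or.inl ⟨h1, h2, h⟩
          · exact Or.inr ⟨h1, h2, h⟩
        · rintro (⟨h1, h2⟩ | ⟨h1, h2⟩) <;> exact ⟨h1, h2.1, Nat.zero_le _⟩
      rw [e0]
      apply Finset.card_union_of_disjoint
      rw [Finset.disjoint_left]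
      intro p hp hp'
      have := (Finset.mem_filter.mp hp).2
      have := (Finset.mem_filter.mp hp').2
      omega
    rw [e2] at h2
    push_cast at h2
    have hsplit' : (N:ℝ) = d * d + Q01.card + (Q10.card + Q11.card) := by
      rw [hsplit, hQ00card]; push_cast; ring
    linarith
  -- main inequality: d^2 ≤ (1-δ)^2 * N
  have hmain : (d:ℝ) ^ 2 ≤ (1 - δ) ^ 2 * N := by
    have hNr : (0:ℝ) < N := by exact_mod_cast hN1
    have hsplitR : (N:ℝ) = d * d + Q10.card + Q01.card + Q11.card := by
      rw [hsplit, hQ00card]; push_cast; ring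
    have hwR : (Q11.card : ℝ) ≤ FA.card * FB.card := by exact_mod_cast hw
    have huR : (FA.card : ℝ) * d ≤ Q10.card := by exact_mod_cast hu
    have hvR : (FB.card : ℝ) * d ≤ Q01.card := by exact_mod_cast hv
    have hA0 : (0:ℝ) ≤ FA.card := by positivity
    have hB0 : (0:ℝ) ≤ FB.card := by positivity
    have hdr : (0:ℝ) < d := by exact_mod_cast hd
    have h3 : (d:ℝ)^2 * Q11.card ≤ (Q10.card : ℝ) * Q01.card := by
      have h1 : (FA.card:ℝ) * d * ((FB.card:ℝ) * d) ≤ (Q10.card : ℝ) * Q01.card :=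
        mul_le_mul huR hvR (by positivity) (by positivity)
      have h5 : (d:ℝ)^2 * Q11.card ≤ (d:ℝ)^2 * (FA.card * FB.card) :=
        mul_le_mul_of_nonneg_left hwR (by positivity)
      have h6 : (d:ℝ)^2 * (FA.card * FB.card) = (FA.card:ℝ) * d * ((FB.card:ℝ) * d) := by ring
      linarith
    have hprod : (d:ℝ)^2 * N ≤ ((d:ℝ) * d + Q10.card) * ((d:ℝ) * d + Q01.card) := by
      rw [hsplitR]
      have expand : ((d:ℝ) * d + Q10.card) * ((d:ℝ) * d + Q01.card)
          - (d:ℝ)^2 * ((d:ℝ) * (d:ℝ) + Q10.card + Q01.card + Q11.card)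
          = (Q10.card:ℝ) * Q01.card - (d:ℝ)^2 * Q11.card := by ring
      linarith
    have hUpos : (0:ℝ) ≤ (d:ℝ) * d + Q10.card := by positivity
    have hVpos : (0:ℝ) ≤ (d:ℝ) * d + Q01.card := by positivity
    have h2 : ((d:ℝ) * d + Q10.card) * ((d:ℝ) * d + Q01.card) ≤ ((1 - δ) * N) * ((1 - δ) * N) :=
      mul_le_mul hub hvb hVpos (hUpos.trans hub)
    have h4 : (d:ℝ)^2 * N ≤ ((1 - δ)^2 * N) * N := by
      have expand2 : ((1 - δ) * (N:ℝ)) * ((1 - δ) * N) = ((1 - δ)^2 * N) * N := by ring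
      linarith
    exact le_of_mul_le_mul_right h4 hNr
  -- derive both conclusions
  have hNr : (0:ℝ) < N := by exact_mod_cast hN1
  have hdr : (0:ℝ) < d := by exact_mod_cast hd
  have hδ1 : 0 < 1 - δ := by
    have h0 : (0:ℝ) < (1 - δ) * N := by
      have : (0:ℝ) < (d:ℝ) * d + Q10.card := by positivity
      linarith
    nlinarith
  have hδ1' : 1 - δ ≤ 1 := by nlinarith
  set s : ℝ := Real.sqrt N with hs
  have hs0 : 0 ≤ s := Real.sqrt_nonneg _
  have hs2 : s ^ 2 = N := Real.sq_sqrt hNr.le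
  have hdls : (d:ℝ) ≤ (1 - δ) * s := by
    have h1 : (d:ℝ) = Real.sqrt ((d:ℝ)^2) := (Real.sqrt_sq hdr.le).symm
    rw [h1]
    have h2 : (1 - δ) * s = Real.sqrt ((1 - δ)^2 * N) := by
      rw [Real.sqrt_mul (by positivity), Real.sqrt_sq hδ1.le]
    rw [h2]
    exact Real.sqrt_le_sqrt hmain
  have hds : (d:ℝ) ≤ s := le_trans hdls (by nlinarith)
  constructor
  · have hkey : Real.sqrt (δ * N + (d:ℝ)^2/4) ≤ s - (d:ℝ)/2 := by
      have h1 : δ * N + (d:ℝ)^2/4 ≤ (s - (d:ℝ)/2)^2 := by nlinarith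
      calc Real.sqrt (δ * N + (d:ℝ)^2/4) ≤ Real.sqrt ((s - (d:ℝ)/2)^2) :=
            Real.sqrt_le_sqrt h1
        _ = s - (d:ℝ)/2 := Real.sqrt_sq (by nlinarith)
    have hsq0 : 0 ≤ Real.sqrt (δ * N + (d:ℝ)^2/4) := Real.sqrt_nonneg _
    nlinarith
  · rw [div_le_div_iff₀ (by positivity) (by norm_num)]
    nlinarith
end

section
/- Let d ≥ 1 be a natural number, let δ > 0, and let S ⊆ ℕ² be a finite nonempty downward closed set with N = |S| whose d-robustness satisfies Π_d(S) ≥ δ·N. Then N ≥ d²/2 + d·√(2δN) − d. -/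
/-!
Let `h i = #{j | (i, j) ∈ S}` be the row lengths of `S`, a non-increasing function, and
`t = √(2δN)`, so that every corner `{i ≥ a, j ≥ b}` with `a + b = d` holds
`∑_{i ≥ a} (h i - b)⁺ ≥ t²/2` cells. By induction on `L = d - s`, rows `s, …, d-1` hold at
least `L²/2 + tL - t²/2` cells: either they all have length `≥ L`, or the corner at `(s, L)`
lies in the rows `s, …, τ-1` before the first row shorter than `L`, which therefore hold at
least `t²/2 + (τ - s)L` cells, and the induction hypothesis applies from `τ`. The two cases
close by `(L - t)² ≥ 0` and `(τ - s - t)² ≥ 0`. Adding the corner at `(d, 0)` gives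
`N ≥ d²/2 + td`.
-/

open Finset

namespace YoungDiagram

noncomputable def ofFinite (S : Set (ℕ × ℕ)) (hfin : S.Finite) (hS : IsLowerSet S) :
    YoungDiagram where
  cells := hfin.toFinset
  isLowerSet := by simpa using hS

@[simp]
theorem mem_ofFinite {S : Set (ℕ × ℕ)} (hfin : S.Finite) (hS : IsLowerSet S) {c : ℕ × ℕ} :
    c ∈ ofFinite S hfin hS ↔ c ∈ S :=
  hfin.mem_toFinset

theorem card_filter_le_fst_le_snd (μ : YoungDiagram) {X : ℕ} (hX : μ.colLen 0 ≤ X) (a b : ℕ) :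
    #{c ∈ μ.cells | a ≤ c.1 ∧ b ≤ c.2} = ∑ i ∈ Ico a X, (μ.rowLen i - b) := by
  have hcells : {c ∈ μ.cells | a ≤ c.1 ∧ b ≤ c.2} =
      (Ico a X).biUnion fun i => {i} ×ˢ Ico b (μ.rowLen i) := by
    ext ⟨i, j⟩
    simp only [mem_filter, mem_cells, mem_biUnion, mem_product, mem_singleton, mem_Ico]
    constructor
    · rintro ⟨hij, hai, hbj⟩
      have hi : i < μ.colLen 0 := mem_iff_lt_colLen.1 (μ.up_left_mem le_rfl (Nat.zero_le j) hij)
      exact ⟨i, ⟨hai, by omega⟩, rfl, hbj, mem_iff_lt_rowLen.1 hij⟩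
    · rintro ⟨i, ⟨hai, -⟩, rfl, hbj, hj⟩
      exact ⟨mem_iff_lt_rowLen.2 hj, hai, hbj⟩
  rw [hcells, card_biUnion]
  · simp
  · intro i _ i' _ hii'
    simp only [Function.onFun, disjoint_left, mem_product, mem_singleton]
    rintro c ⟨rfl, -⟩ ⟨rfl, -⟩
    exact hii' rfl

end YoungDiagram

namespace Antitone

variable {h : ℕ → ℕ}

theorem sum_Ico_tsub_add_eq (hh : Antitone h) {s τ X L : ℕ} (hsτ : s ≤ τ) (hτX : τ ≤ X)
    (hle : ∀ x ∈ Ico s τ, L ≤ h x) (hτ : h τ ≤ L) :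
    ∑ x ∈ Ico s X, (h x - L) + (τ - s) * L = ∑ x ∈ Ico s τ, h x := by
  have htail : ∑ x ∈ Ico τ X, (h x - L) = 0 :=
    sum_eq_zero fun x hx => Nat.sub_eq_zero_of_le ((hh (mem_Ico.1 hx).1).trans hτ)
  rw [← sum_Ico_consecutive _ hsτ hτX, htail, add_zero, ← Nat.card_Ico, ← smul_eq_mul,
    ← sum_const, ← sum_add_distrib]
  exact sum_congr rfl fun x hx => Nat.sub_add_cancel (hle x hx)

theorem sq_div_two_add_mul_sub_le_sum_Ico (hh : Antitone h) {t : ℝ} (ht : 0 < t) {d X : ℕ}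
    (hdX : d ≤ X) (hcorner : ∀ s ≤ d, t ^ 2 / 2 ≤ ((∑ x ∈ Ico s X, (h x - (d - s)) : ℕ) : ℝ))
    {s : ℕ} (hs : s ≤ d) :
    ((d - s : ℕ) : ℝ) ^ 2 / 2 + t * (d - s : ℕ) - t ^ 2 / 2 ≤ ((∑ x ∈ Ico s d, h x : ℕ) : ℝ) := by
  induction hL : d - s using Nat.strong_induction_on generalizing s with
  | _ L ih =>
  by_cases hwide : ∀ x ∈ Ico s d, L ≤ h x
  · have hsum : L * L ≤ ∑ x ∈ Ico s d, h x := by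
      simpa [hL] using card_nsmul_le_sum _ _ _ hwide
    have hsumR : (L : ℝ) * L ≤ ((∑ x ∈ Ico s d, h x : ℕ) : ℝ) := by exact_mod_cast hsum
    nlinarith [sq_nonneg ((L : ℝ) - t)]
  push Not at hwide
  obtain ⟨x₀, hx₀, hx₀L⟩ := hwide
  have hex : ∃ x, s ≤ x ∧ h x < L := ⟨x₀, (mem_Ico.1 hx₀).1, hx₀L⟩
  obtain ⟨τ, ⟨hsτ, hτL⟩, hτmin⟩ : ∃ τ, (s ≤ τ ∧ h τ < L) ∧ ∀ x < τ, ¬(s ≤ x ∧ h x < L) :=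
    ⟨Nat.find hex, Nat.find_spec hex, fun _ => Nat.find_min hex⟩
  have hτd : τ < d := by
    by_contra! hdτ
    exact hτmin x₀ ((mem_Ico.1 hx₀).2.trans_le hdτ) ⟨(mem_Ico.1 hx₀).1, hx₀L⟩
  have hle : ∀ x ∈ Ico s τ, L ≤ h x := fun x hx => by
    by_contra! hlt
    exact hτmin x (mem_Ico.1 hx).2 ⟨(mem_Ico.1 hx).1, hlt⟩
  have hblock := hh.sum_Ico_tsub_add_eq hsτ (hτd.le.trans hdX) hle hτL.le
  have hcs := hcorner s hs
  rw [hL] at hcs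
  generalize ∑ x ∈ Ico s X, (h x - L) = A at hblock hcs
  have hsτ' : s < τ := by
    refine lt_of_le_of_ne hsτ fun hτs => ?_
    rw [← hτs, Ico_self, sum_empty, Nat.sub_self, zero_mul, add_zero] at hblock
    rw [hblock, Nat.cast_zero] at hcs
    nlinarith
  have hrest := ih (d - τ) (by omega) hτd.le rfl
  rw [← sum_Ico_consecutive _ hsτ hτd.le, Nat.cast_add, ← hblock]
  have hLR : (L : ℝ) = d - s := by rw [← hL, Nat.cast_sub hs]
  push_cast [Nat.cast_sub hsτ, Nat.cast_sub hτd.le, Nat.cast_sub hs, hLR] at hrest ⊢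
  nlinarith [sq_nonneg ((τ : ℝ) - s - t)]

end Antitone

theorem stmt_19_general (d : ℕ) (δ : ℝ) (hδ : 0 < δ)
    (S : Set (ℕ × ℕ)) (hfin : S.Finite) (hne : S.Nonempty)
    (hdc : ∀ y ∈ S, ∀ x : ℕ × ℕ, x.1 ≤ y.1 → x.2 ≤ y.2 → x ∈ S)
    (hrob : ∀ d1 d2 : ℕ, d1 + d2 = d →
      δ * S.ncard ≤ ({p ∈ S | d1 ≤ p.1 ∧ d2 ≤ p.2}.ncard : ℝ)) :
    (d : ℝ) ^ 2 / 2 + (d : ℝ) * Real.sqrt (2 * δ * S.ncard) - (d : ℝ) ≤ (S.ncard : ℝ) := by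
  have hS : IsLowerSet S := fun y x hxy hy => hdc y hy x hxy.1 hxy.2
  set μ := YoungDiagram.ofFinite S hfin hS
  set X := max d (μ.colLen 0)
  have hncard_corner (a b : ℕ) :
      {p ∈ S | a ≤ p.1 ∧ b ≤ p.2}.ncard = ∑ i ∈ Ico a X, (μ.rowLen i - b) := by
    rw [← μ.card_filter_le_fst_le_snd (le_max_right _ _), ← Set.ncard_coe_finset, coe_filter]
    simp only [YoungDiagram.mem_cells, μ, YoungDiagram.mem_ofFinite]
  have hN : S.ncard = ∑ i ∈ Ico 0 d, μ.rowLen i + ∑ i ∈ Ico d X, μ.rowLen i := by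
    rw [sum_Ico_consecutive _ (Nat.zero_le d) (le_max_left _ _)]
    simpa using hncard_corner 0 0
  set t := Real.sqrt (2 * δ * S.ncard)
  have ht2 : t ^ 2 / 2 = δ * S.ncard := by
    rw [Real.sq_sqrt (by positivity)]
    ring
  have ht : 0 < t := Real.sqrt_pos.2 (by have := (Set.ncard_pos hfin).2 hne; positivity)
  have hcorner_bound (s : ℕ) (hs : s ≤ d) :
      t ^ 2 / 2 ≤ ((∑ i ∈ Ico s X, (μ.rowLen i - (d - s)) : ℕ) : ℝ) := by
    rw [ht2, ← hncard_corner]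
    exact hrob s (d - s) (by omega)
  have hleft := Antitone.sq_div_two_add_mul_sub_le_sum_Ico (μ.rowLen_anti ·) ht (le_max_left _ _)
    hcorner_bound (Nat.zero_le d)
  have hright := hcorner_bound d le_rfl
  simp only [Nat.sub_zero, Nat.sub_self] at hleft hright
  rw [hN, Nat.cast_add]
  linarith [(d.cast_nonneg : (0 : ℝ) ≤ d)]

/-- a finite nonempty downward closed `S ⊆ ℕ²` of size `N` with `d`-robustness
at least `δ·N` for some `δ > 0` satisfies `N ≥ d²/2 + d·√(2δN) − d`. -/
theorem stmt_19 (d : ℕ) (hd : 1 ≤ d) (δ : ℝ) (hδ : 0 < δ)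
    (S : Set (ℕ × ℕ)) (hfin : S.Finite) (hne : S.Nonempty)
    (hdc : ∀ y ∈ S, ∀ x : ℕ × ℕ, x.1 ≤ y.1 → x.2 ≤ y.2 → x ∈ S)
    (hrob : ∀ d1 d2 : ℕ, d1 + d2 = d →
      δ * S.ncard ≤ ({p ∈ S | d1 ≤ p.1 ∧ d2 ≤ p.2}.ncard : ℝ)) :
    (d : ℝ) ^ 2 / 2 + (d : ℝ) * Real.sqrt (2 * δ * S.ncard) - (d : ℝ) ≤ (S.ncard : ℝ) :=
  stmt_19_general d δ hδ S hfin hne hdc hrob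
end
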